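/- arXiv:quant-ph/0003048 — 4 statements merged into one kernel-verified Lean document; each statement's English description precedes it below -/
import Mathlib

section
/- Let ρ and σ be commuting density matrices (ρσ = σρ), with spectral decompositions ρ = Σ_i ρ_i P_i and σ = Σ_j σ_j Q_j into distinct eigenvalues. Then S(ρ|σ) = −Σ_{i,j} tr(σ Q_j)·ρ_i·tr(P_i Q_j)·ln(ρ_i / tr(ρ Q_j)), where the sum runs over all pairs (i,j) with ρ_i·tr(P_i Q_j) > 0 (for such pairs, tr(ρ Q_j) > 0). -/
open Matrix
open scoped ComplexOrder

/-- `η(A) = −∑ᵢ λᵢ ln λᵢ` where the `λᵢ` are the eigenvalues of the Hermitian matrix `A`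
listed with multiplicity (with the convention `0 · ln 0 = 0`, which holds automatically
since `Real.log 0 = 0`). -/
noncomputable def eta {n : ℕ} (A : Matrix (Fin n) (Fin n) ℂ) : ℝ :=
  if h : A.IsHermitian then -∑ i, h.eigenvalues i * Real.log (h.eigenvalues i) else 0

/-- `F(ρ, Q) = η(QρQ) + tr(QρQ)·ln tr(QρQ)`. -/
noncomputable def condF {n : ℕ} (ρ Q : Matrix (Fin n) (Fin n) ℂ) : ℝ :=
  eta (Q * ρ * Q) + (Q * ρ * Q).trace.re * Real.log (Q * ρ * Q).trace.re

/-- The orthogonal projection onto the eigenspace of a Hermitian matrix for the value `c`. -/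
noncomputable def eigProj {n : ℕ} {σ : Matrix (Fin n) (Fin n) ℂ} (h : σ.IsHermitian) (c : ℝ) :
    Matrix (Fin n) (Fin n) ℂ :=
  (h.eigenvectorUnitary : Matrix (Fin n) (Fin n) ℂ) *
    Matrix.diagonal (fun i => if h.eigenvalues i = c then (1 : ℂ) else 0) *
    star (h.eigenvectorUnitary : Matrix (Fin n) (Fin n) ℂ)

/-- The conditional entropy `S(ρ|σ) = ∑ⱼ tr(Qⱼ σ) · F(ρ, Qⱼ)`, the sum running over the
distinct eigenvalues `σⱼ` of `σ`, with `Qⱼ` the corresponding eigenprojections. -/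
noncomputable def condS {n : ℕ} (ρ σ : Matrix (Fin n) (Fin n) ℂ) : ℝ :=
  if h : σ.IsHermitian then
    ∑ c ∈ Finset.image h.eigenvalues Finset.univ,
      (eigProj h c * σ).trace.re * condF ρ (eigProj h c)
  else 0

open Polynomial

set_option linter.unusedSectionVars false

variable {n : ℕ} {ι : Type*} [Fintype ι] [DecidableEq ι]


lemma sum_proj_mul_sum_proj (x y : ι → ℝ) (R : ι → Matrix (Fin n) (Fin n) ℂ)
    (hidem : ∀ t, R t * R t = R t)
    (horth : ∀ t t', t ≠ t' → R t * R t' = 0) :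
    (∑ t, x t • R t) * (∑ t, y t • R t) = ∑ t, (x t * y t) • R t := by
  rw [Finset.sum_mul_sum]
  refine Finset.sum_congr rfl fun t _ => ?_
  rw [Finset.sum_eq_single t]
  · rw [smul_mul_smul_comm, hidem t, mul_comm]
  · intro t' _ hne
    rw [smul_mul_smul_comm, horth t t' (Ne.symm hne), smul_zero]
  · simp

set_option linter.unusedSectionVars false

lemma pow_sum_proj (a : ι → ℝ) (R : ι → Matrix (Fin n) (Fin n) ℂ)
    (hidem : ∀ t, R t * R t = R t)
    (horth : ∀ t t', t ≠ t' → R t * R t' = 0)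
    (hsum : ∑ t, R t = 1) (m : ℕ) :
    (∑ t, a t • R t) ^ m = ∑ t, (a t ^ m) • R t := by
  induction m with
  | zero => simp [hsum]
  | succ m ih =>
      rw [pow_succ, ih, sum_proj_mul_sum_proj _ _ _ hidem horth]
      simp [pow_succ]

lemma aeval_sum_proj (a : ι → ℝ) (R : ι → Matrix (Fin n) (Fin n) ℂ)
    (hidem : ∀ t, R t * R t = R t)
    (horth : ∀ t t', t ≠ t' → R t * R t' = 0)
    (hsum : ∑ t, R t = 1) (p : Polynomial ℝ) :
    aeval (∑ t, a t • R t) p = ∑ t, (p.eval (a t)) • R t := by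
  induction p using Polynomial.induction_on' with
  | add p q hp hq =>
      rw [map_add, hp, hq, ← Finset.sum_add_distrib]
      exact Finset.sum_congr rfl fun t _ => by rw [eval_add, add_smul]
  | monomial m c =>
      rw [aeval_monomial, pow_sum_proj a R hidem horth hsum m]
      rw [Finset.mul_sum]
      refine Finset.sum_congr rfl fun t _ => ?_
      rw [eval_monomial, Algebra.algebraMap_eq_smul_one]
      rw [smul_one_mul, smul_smul]

lemma conjU_pow (U M : Matrix (Fin n) (Fin n) ℂ) (hU : U * star U = 1) (hU' : star U * U = 1)
    (m : ℕ) : (U * M * star U) ^ m = U * M ^ m * star U := by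
  induction m with
  | zero => simp [hU]
  | succ m ih =>
      rw [pow_succ, ih, pow_succ]
      rw [show U * M ^ m * star U * (U * M * star U)
            = U * M ^ m * (star U * U) * M * star U by simp only [mul_assoc]]
      rw [hU', mul_one]
      simp only [mul_assoc]

lemma aeval_hermitian {A : Matrix (Fin n) (Fin n) ℂ} (hA : A.IsHermitian) (p : ℝ[X]) :
    aeval A p = (hA.eigenvectorUnitary : Matrix (Fin n) (Fin n) ℂ) *
      diagonal (fun i => ((p.eval (hA.eigenvalues i) : ℝ) : ℂ)) *
      star (hA.eigenvectorUnitary : Matrix (Fin n) (Fin n) ℂ) := by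
  set U : Matrix (Fin n) (Fin n) ℂ := (hA.eigenvectorUnitary : Matrix (Fin n) (Fin n) ℂ) with hUdef
  have hU : U * star U = 1 := (Matrix.mem_unitaryGroup_iff).mp hA.eigenvectorUnitary.2
  have hU' : star U * U = 1 := (Matrix.mem_unitaryGroup_iff').mp hA.eigenvectorUnitary.2
  induction p using Polynomial.induction_on' with
  | add p q hp hq =>
      rw [map_add, hp, hq]
      rw [← add_mul, ← mul_add, diagonal_add]
      congr 2
      funext i
      simp [eval_add]
  | monomial m c =>
      rw [aeval_monomial]
      rw [show A ^ m = U * (diagonal (RCLike.ofReal ∘ hA.eigenvalues)) ^ m * star U from by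
        rw [← conjU_pow _ _ hU hU']; congr 1; exact hA.spectral_theorem]
      rw [diagonal_pow]
      rw [Algebra.algebraMap_eq_smul_one, smul_one_mul]
      rw [← Matrix.smul_mul, ← Matrix.mul_smul]
      congr 2
      ext i j
      rcases eq_or_ne i j with h | h
      · subst h
        simp [eval_monomial, Function.comp, diagonal_apply_eq]
      · simp [diagonal_apply_ne _ h]

lemma unitary_left {A : Matrix (Fin n) (Fin n) ℂ} (hA : A.IsHermitian) :
    (hA.eigenvectorUnitary : Matrix (Fin n) (Fin n) ℂ) *
      star (hA.eigenvectorUnitary : Matrix (Fin n) (Fin n) ℂ) = 1 :=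
  (Matrix.mem_unitaryGroup_iff).mp hA.eigenvectorUnitary.2

lemma unitary_right {A : Matrix (Fin n) (Fin n) ℂ} (hA : A.IsHermitian) :
    star (hA.eigenvectorUnitary : Matrix (Fin n) (Fin n) ℂ) *
      (hA.eigenvectorUnitary : Matrix (Fin n) (Fin n) ℂ) = 1 :=
  (Matrix.mem_unitaryGroup_iff').mp hA.eigenvectorUnitary.2

lemma trace_eigProj {A : Matrix (Fin n) (Fin n) ℂ} (hA : A.IsHermitian) (c : ℝ) :
    (eigProj hA c).trace =
      ((Finset.univ.filter (fun i => hA.eigenvalues i = c)).card : ℂ) := by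
  rw [eigProj, trace_mul_cycle, unitary_right hA, one_mul, trace_diagonal]
  classical
  simp [Finset.sum_boole]

lemma spectral_eigProj_eq {A : Matrix (Fin n) (Fin n) ℂ} (hA : A.IsHermitian)
    (a : ι → ℝ) (R : ι → Matrix (Fin n) (Fin n) ℂ)
    (ha : Function.Injective a)
    (hidem : ∀ t, R t * R t = R t)
    (horth : ∀ t t', t ≠ t' → R t * R t' = 0)
    (hsum : ∑ t, R t = 1)
    (hdec : A = ∑ t, a t • R t) (t : ι) :
    eigProj hA (a t) = R t := by
  classical
  set E : Finset ℝ := Finset.image a Finset.univ ∪ Finset.image hA.eigenvalues Finset.univ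
    with hE
  have hInj : Set.InjOn id (E : Set ℝ) := Set.injOn_id _
  have hmem : ∀ t', a t' ∈ E := fun t' => Finset.mem_union_left _ (by simp)
  have hmem2 : ∀ i, hA.eigenvalues i ∈ E := fun i => Finset.mem_union_right _ (by simp)
  set p := Lagrange.basis E id (a t) with hp
  have h1 : aeval A p = R t := by
    rw [hdec, aeval_sum_proj a R hidem horth hsum]
    rw [Finset.sum_eq_single t]
    · have : p.eval (a t) = 1 := Lagrange.eval_basis_self hInj (hmem t)
      rw [this, one_smul]
    · intro t' _ hne
      have : p.eval (a t') = 0 :=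
        Lagrange.eval_basis_of_ne (v := id) (s := E) (fun h => hne (ha h.symm)) (hmem t')
      rw [this, zero_smul]
    · simp
  have h2 : aeval A p = eigProj hA (a t) := by
    rw [aeval_hermitian hA p, eigProj]
    have hfun : (fun i => ((p.eval (hA.eigenvalues i) : ℝ) : ℂ)) =
        (fun i => if hA.eigenvalues i = a t then (1 : ℂ) else 0) := by
      funext i
      rcases eq_or_ne (hA.eigenvalues i) (a t) with h | h
      · rw [if_pos h]
        have : p.eval (hA.eigenvalues i) = 1 := by
          rw [h]; exact Lagrange.eval_basis_self hInj (hmem t)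
        rw [this, Complex.ofReal_one]
      · rw [if_neg h]
        have : p.eval (hA.eigenvalues i) = 0 :=
          Lagrange.eval_basis_of_ne (v := id) (s := E) (Ne.symm h) (hmem2 i)
        rw [this, Complex.ofReal_zero]
    rw [hfun]
  rw [← h2, h1]

lemma conj_eq_zero {U M : Matrix (Fin n) (Fin n) ℂ} (hU' : star U * U = 1)
    (h : U * M * star U = 0) : M = 0 := by
  calc M = (star U * U) * M * (star U * U) := by rw [hU']; simp
    _ = star U * (U * M * star U) * U := by simp only [mul_assoc]
    _ = 0 := by rw [h]; simp

lemma spectral_eigenvalues_mem {A : Matrix (Fin n) (Fin n) ℂ} (hA : A.IsHermitian)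
    (a : ι → ℝ) (R : ι → Matrix (Fin n) (Fin n) ℂ)
    (hidem : ∀ t, R t * R t = R t)
    (horth : ∀ t t', t ≠ t' → R t * R t' = 0)
    (hsum : ∑ t, R t = 1)
    (hdec : A = ∑ t, a t • R t) (i : Fin n) :
    ∃ t, hA.eigenvalues i = a t := by
  classical
  by_contra hcon
  push_neg at hcon
  set E : Finset ℝ := Finset.image a Finset.univ ∪ Finset.image hA.eigenvalues Finset.univ
    with hE
  have hInj : Set.InjOn id (E : Set ℝ) := Set.injOn_id _
  have hmem : ∀ t', a t' ∈ E := fun t' => Finset.mem_union_left _ (by simp)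
  have hmem2 : ∀ i, hA.eigenvalues i ∈ E := fun i => Finset.mem_union_right _ (by simp)
  set c := hA.eigenvalues i with hc
  set p := Lagrange.basis E id c with hp
  have h1 : aeval A p = 0 := by
    rw [hdec, aeval_sum_proj a R hidem horth hsum]
    refine Finset.sum_eq_zero fun t' _ => ?_
    have : p.eval (a t') = 0 :=
      Lagrange.eval_basis_of_ne (v := id) (s := E) (fun h => hcon t' h) (hmem t')
    rw [this, zero_smul]
  have h2 := (aeval_hermitian hA p).symm.trans h1
  have h3 : diagonal (fun i => ((p.eval (hA.eigenvalues i) : ℝ) : ℂ)) = 0 :=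
    conj_eq_zero (unitary_right hA) h2
  have h4 : ((p.eval c : ℝ) : ℂ) = 0 := by
    have := congrFun (congrFun h3 i) i
    simpa [diagonal_apply_eq] using this
  have h5 : p.eval c = 1 := Lagrange.eval_basis_self hInj (hmem2 i)
  rw [h5] at h4
  norm_num at h4

lemma sum_f_eigen_complete {A : Matrix (Fin n) (Fin n) ℂ} (hA : A.IsHermitian)
    (a : ι → ℝ) (R : ι → Matrix (Fin n) (Fin n) ℂ)
    (ha : Function.Injective a)
    (hidem : ∀ t, R t * R t = R t)
    (horth : ∀ t t', t ≠ t' → R t * R t' = 0)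
    (hsum : ∑ t, R t = 1)
    (hdec : A = ∑ t, a t • R t) (f : ℝ → ℝ) :
    ∑ i, f (hA.eigenvalues i) = ∑ t, f (a t) * (R t).trace.re := by
  classical
  have hmem := spectral_eigenvalues_mem hA a R hidem horth hsum hdec
  choose T hT using hmem
  have key : ∀ t, Finset.univ.filter (fun i => T i = t)
      = Finset.univ.filter (fun i => hA.eigenvalues i = a t) := by
    intro t
    ext i
    simp only [Finset.mem_filter, Finset.mem_univ, true_and]
    constructor
    · rintro rfl; exact hT i
    · intro h; exact ha ((hT i).symm.trans h)
  have hfib := Finset.sum_fiberwise_of_maps_to (g := T) (s := Finset.univ) (t := Finset.univ)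
      (fun i _ => Finset.mem_univ (T i)) (fun i => f (hA.eigenvalues i))
  rw [← hfib]
  refine Finset.sum_congr rfl fun t _ => ?_
  have htr : (R t).trace.re
      = ((Finset.univ.filter (fun i => hA.eigenvalues i = a t)).card : ℝ) := by
    rw [← spectral_eigProj_eq hA a R ha hidem horth hsum hdec t, trace_eigProj]
    simp
  rw [key t, htr]
  rw [Finset.sum_congr rfl (fun i hi => by rw [(Finset.mem_filter.mp hi).2])]
  rw [Finset.sum_const, nsmul_eq_mul, mul_comm]

lemma sum_f_eigen {A : Matrix (Fin n) (Fin n) ℂ} (hA : A.IsHermitian)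
    (a : ι → ℝ) (R : ι → Matrix (Fin n) (Fin n) ℂ)
    (ha : Function.Injective a)
    (hidem : ∀ t, R t * R t = R t)
    (horth : ∀ t t', t ≠ t' → R t * R t' = 0)
    (hdec : A = ∑ t, a t • R t) (f : ℝ → ℝ) (hf : f 0 = 0) :
    ∑ i, f (hA.eigenvalues i) = ∑ t, f (a t) * (R t).trace.re := by
  classical
  set S : Matrix (Fin n) (Fin n) ℂ := ∑ t, R t with hS
  have hSS : S * S = S := by
    have := sum_proj_mul_sum_proj (fun _ => (1 : ℝ)) (fun _ => (1 : ℝ)) R hidem horth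
    simpa using this
  set C : Matrix (Fin n) (Fin n) ℂ := 1 - S with hC
  have hRS : ∀ t, R t * S = R t := by
    intro t
    rw [hS, Finset.mul_sum, Finset.sum_eq_single t]
    · exact hidem t
    · exact fun t' _ hne => horth t t' (Ne.symm hne)
    · simp
  have hSR : ∀ t, S * R t = R t := by
    intro t
    rw [hS, Finset.sum_mul, Finset.sum_eq_single t]
    · exact hidem t
    · exact fun t' _ hne => horth t' t hne
    · simp
  have hCC : C * C = C := by
    rw [hC]
    simp only [sub_mul, mul_sub, one_mul, mul_one, hSS]
    abel
  have hRC : ∀ t, R t * C = 0 := fun t => by rw [hC, mul_sub, mul_one, hRS, sub_self]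
  have hCR : ∀ t, C * R t = 0 := fun t => by rw [hC, sub_mul, one_mul, hSR, sub_self]
  by_cases h0 : ∃ t0, a t0 = 0
  · obtain ⟨t0, ht0⟩ := h0
    set R' : ι → Matrix (Fin n) (Fin n) ℂ := Function.update R t0 (R t0 + C) with hR'
    have hR'eq : ∀ t, t ≠ t0 → R' t = R t := fun t ht => Function.update_of_ne ht _ _
    have hR't0 : R' t0 = R t0 + C := Function.update_self _ _ _
    have hidem' : ∀ t, R' t * R' t = R' t := by
      intro t
      rcases eq_or_ne t t0 with rfl | ht
      · rw [hR't0, add_mul, mul_add, mul_add, hidem, hCC, hRC, hCR, zero_add, add_zero]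
      · rw [hR'eq t ht]; exact hidem t
    have horth' : ∀ t t', t ≠ t' → R' t * R' t' = 0 := by
      intro t t' hne
      rcases eq_or_ne t t0 with rfl | ht
      · rw [hR't0, hR'eq t' (Ne.symm hne), add_mul, horth _ _ hne, hCR, add_zero]
      · rcases eq_or_ne t' t0 with rfl | ht'
        · rw [hR't0, hR'eq t ht, mul_add, horth _ _ hne, hRC, add_zero]
        · rw [hR'eq t ht, hR'eq t' ht']; exact horth _ _ hne
    have hsum' : ∑ t, R' t = 1 := by
      rw [hR', Finset.sum_update_of_mem (Finset.mem_univ t0)]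
      have : ∑ t ∈ Finset.univ \ {t0}, R t = S - R t0 := by
        rw [hS, Finset.sum_eq_sum_sdiff_singleton_add (Finset.mem_univ t0)]
        abel
      rw [this, hC]
      abel
    have hdec' : A = ∑ t, a t • R' t := by
      rw [hdec]
      refine Finset.sum_congr rfl fun t _ => ?_
      rcases eq_or_ne t t0 with rfl | ht
      · rw [hR't0, ht0, zero_smul, zero_smul]
      · rw [hR'eq t ht]
    rw [sum_f_eigen_complete hA a R' ha hidem' horth' hsum' hdec' f]
    refine Finset.sum_congr rfl fun t _ => ?_
    rcases eq_or_ne t t0 with rfl | ht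
    · rw [hR't0, ht0, hf, zero_mul, zero_mul]
    · rw [hR'eq t ht]
  · push_neg at h0
    set a' : Option ι → ℝ := fun o => o.elim 0 a with ha'def
    set R' : Option ι → Matrix (Fin n) (Fin n) ℂ := fun o => o.elim C R with hR'def
    have ha' : Function.Injective a' := by
      rintro (_ | t) (_ | t') h
      · rfl
      · exact absurd h.symm (h0 t')
      · exact absurd h (h0 t)
      · exact congrArg some (ha h)
    have hidem' : ∀ o, R' o * R' o = R' o := by rintro (_ | t); exacts [hCC, hidem t]
    have horth' : ∀ o o', o ≠ o' → R' o * R' o' = 0 := by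
      rintro (_ | t) (_ | t') hne
      · exact absurd rfl hne
      · exact hCR t'
      · exact hRC t
      · exact horth t t' (fun h => hne (congrArg some h))
    have hsum' : ∑ o, R' o = 1 := by
      rw [Fintype.sum_option]
      show C + S = 1
      rw [hC]
      abel
    have hdec' : A = ∑ o, a' o • R' o := by
      rw [Fintype.sum_option]
      show A = (0 : ℝ) • C + ∑ t, a t • R t
      rw [zero_smul, zero_add, hdec]
    rw [sum_f_eigen_complete hA a' R' ha' hidem' horth' hsum' hdec' f]
    rw [Fintype.sum_option]
    show f 0 * C.trace.re + _ = _
    rw [hf, zero_mul, zero_add]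
    rfl

lemma eigProj_eq_zero {A : Matrix (Fin n) (Fin n) ℂ} (hA : A.IsHermitian) (c : ℝ)
    (hc : ∀ i, hA.eigenvalues i ≠ c) : eigProj hA c = 0 := by
  rw [eigProj]
  have : (fun i => if hA.eigenvalues i = c then (1 : ℂ) else 0) = fun _ => 0 :=
    funext fun i => if_neg (hc i)
  rw [this, diagonal_zero, mul_zero, zero_mul]

lemma trace_re_nonneg {M : Matrix (Fin n) (Fin n) ℂ} (hM : M.PosSemidef) : 0 ≤ M.trace.re := by
  have hdiag : ∀ i, 0 ≤ (M i i).re := by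
    intro i
    have h := hM.dotProduct_mulVec_nonneg (Pi.single i 1)
    have heq : star (Pi.single i 1 : Fin n → ℂ) ⬝ᵥ (M *ᵥ Pi.single i 1) = M i i := by
      simp [dotProduct, mulVec, Pi.single_apply]
    rw [heq] at h
    exact (Complex.le_def.mp h).1
  rw [Matrix.trace, Complex.re_sum]
  exact Finset.sum_nonneg fun i _ => hdiag i

lemma commute_aeval {x y : Matrix (Fin n) (Fin n) ℂ} (h : Commute x y) (p : ℝ[X]) :
    Commute x (aeval y p) := by
  induction p using Polynomial.induction_on' with
  | add p q hp hq => rw [map_add]; exact hp.add_right hq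
  | monomial m c =>
      rw [aeval_monomial]
      exact (Commute.symm (Algebra.commutes c x : _)).mul_right (h.pow_right m)

lemma aeval_proj (a : ι → ℝ) (R : ι → Matrix (Fin n) (Fin n) ℂ)
    (ha : Function.Injective a)
    (hidem : ∀ t, R t * R t = R t)
    (horth : ∀ t t', t ≠ t' → R t * R t' = 0)
    (hsum : ∑ t, R t = 1) (t : ι) :
    aeval (∑ t', a t' • R t') (Lagrange.basis (Finset.image a Finset.univ) id (a t)) = R t := by
  classical
  have hInj : Set.InjOn id ((Finset.image a Finset.univ : Finset ℝ) : Set ℝ) := Set.injOn_id _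
  have hmem : ∀ t', a t' ∈ Finset.image a Finset.univ := fun t' => by simp
  rw [aeval_sum_proj a R hidem horth hsum]
  rw [Finset.sum_eq_single t]
  · have h1 : (Lagrange.basis (Finset.image a Finset.univ) id (a t)).eval (a t) = 1 :=
      Lagrange.eval_basis_self hInj (hmem t)
    rw [h1, one_smul]
  · intro t' _ hne
    have h1 : (Lagrange.basis (Finset.image a Finset.univ) id (a t)).eval (a t') = 0 :=
      Lagrange.eval_basis_of_ne (v := id) (s := Finset.image a Finset.univ)
        (fun h => hne (ha h.symm)) (hmem t')
    rw [h1, zero_smul]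
  · simp

open scoped Classical in
/-- For commuting density matrices `ρ = ∑ᵢ ρᵢ Pᵢ` and `σ = ∑ⱼ σⱼ Qⱼ`
(spectral decompositions into distinct eigenvalues),
`S(ρ|σ) = −∑_{i,j} tr(σQⱼ)·ρᵢ·tr(PᵢQⱼ)·ln(ρᵢ / tr(ρQⱼ))`, the sum running over the pairs
`(i,j)` with `ρᵢ·tr(PᵢQⱼ) > 0`. -/
theorem condS_of_commuting {n k m : ℕ} (hn : 1 ≤ n)
    (ρ σ : Matrix (Fin n) (Fin n) ℂ)
    (hρ : ρ.PosSemidef) (hρ1 : ρ.trace = 1)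
    (hσ : σ.PosSemidef) (hσ1 : σ.trace = 1)
    (hcomm : ρ * σ = σ * ρ)
    (r : Fin k → ℝ) (P : Fin k → Matrix (Fin n) (Fin n) ℂ)
    (hr : Function.Injective r)
    (hPproj : ∀ i, (P i)ᴴ = P i ∧ P i * P i = P i ∧ P i ≠ 0)
    (hPorth : ∀ i i', i ≠ i' → P i * P i' = 0)
    (hPsum : ∑ i, P i = 1)
    (hρdec : ρ = ∑ i, r i • P i)
    (s : Fin m → ℝ) (Q : Fin m → Matrix (Fin n) (Fin n) ℂ)
    (hs : Function.Injective s)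
    (hQproj : ∀ j, (Q j)ᴴ = Q j ∧ Q j * Q j = Q j ∧ Q j ≠ 0)
    (hQorth : ∀ j j', j ≠ j' → Q j * Q j' = 0)
    (hQsum : ∑ j, Q j = 1)
    (hσdec : σ = ∑ j, s j • Q j) :
    condS ρ σ = -∑ j : Fin m, ∑ i ∈ Finset.univ.filter
        (fun i : Fin k => 0 < r i * (P i * Q j).trace.re),
      (σ * Q j).trace.re * (r i * ((P i * Q j).trace.re *
        Real.log (r i / (ρ * Q j).trace.re))) := by
  have hσH : σ.IsHermitian := hσ.1
  have hρH : ρ.IsHermitian := hρ.1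
  have hPidem : ∀ i, P i * P i = P i := fun i => (hPproj i).2.1
  have hQidem : ∀ j, Q j * Q j = Q j := fun j => (hQproj j).2.1
  -- P i commutes with Q j
  have hPQ : ∀ i j, P i * Q j = Q j * P i := by
    intro i j
    have hPi : P i = aeval ρ (Lagrange.basis (Finset.image r Finset.univ) id (r i)) := by
      conv_lhs => rw [← aeval_proj r P hr hPidem hPorth hPsum i]
      rw [← hρdec]
    have hQj : Q j = aeval σ (Lagrange.basis (Finset.image s Finset.univ) id (s j)) := by
      conv_lhs => rw [← aeval_proj s Q hs hQidem hQorth hQsum j]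
      rw [← hσdec]
    have h1 : Commute ρ (aeval σ (Lagrange.basis (Finset.image s Finset.univ) id (s j))) :=
      commute_aeval hcomm _
    have h3 := commute_aeval h1.symm (Lagrange.basis (Finset.image r Finset.univ) id (r i))
    rw [hPi, hQj]
    exact h3.symm
  -- nonnegativity of eigenvalues r i
  have hr0 : ∀ i, 0 ≤ r i := by
    intro i
    by_contra hneg
    push_neg at hneg
    have hne : ∀ i0, hρH.eigenvalues i0 ≠ r i := fun i0 h => by
      have := hρ.eigenvalues_nonneg i0
      rw [h] at this
      exact absurd this (not_le.mpr hneg)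
    have := eigProj_eq_zero hρH (r i) hne
    rw [spectral_eigProj_eq hρH r P hr hPidem hPorth hPsum hρdec i] at this
    exact (hPproj i).2.2 this
  -- the projections P i * Q j
  have hRherm : ∀ i j, (P i * Q j)ᴴ = P i * Q j := by
    intro i j
    rw [conjTranspose_mul, (hPproj i).1, (hQproj j).1, ← hPQ]
  have hRidem : ∀ j i, (P i * Q j) * (P i * Q j) = P i * Q j := by
    intro j i
    calc P i * Q j * (P i * Q j) = P i * (Q j * P i) * Q j := by simp only [mul_assoc]
      _ = P i * (P i * Q j) * Q j := by rw [← hPQ]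
      _ = (P i * P i) * (Q j * Q j) := by simp only [mul_assoc]
      _ = P i * Q j := by rw [hPidem, hQidem]
  have hRorth : ∀ j i i', i ≠ i' → (P i * Q j) * (P i' * Q j) = 0 := by
    intro j i i' hne
    calc P i * Q j * (P i' * Q j) = P i * (Q j * P i') * Q j := by simp only [mul_assoc]
      _ = P i * (P i' * Q j) * Q j := by rw [← hPQ]
      _ = (P i * P i') * (Q j * Q j) := by simp only [mul_assoc]
      _ = 0 := by rw [hPorth i i' hne, zero_mul]
  have hRpsd : ∀ i j, ((P i * Q j)).PosSemidef := by
    intro i j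
    have := posSemidef_conjTranspose_mul_self (P i * Q j)
    rwa [hRherm i j, hRidem j i] at this
  have hc0 : ∀ i j, 0 ≤ (P i * Q j).trace.re := fun i j => trace_re_nonneg (hRpsd i j)
  -- rewrite condS
  rw [condS, dif_pos hσH]
  have himg : Finset.image hσH.eigenvalues Finset.univ = Finset.image s Finset.univ := by
    apply Finset.Subset.antisymm
    · intro c hc
      simp only [Finset.mem_image] at hc ⊢
      obtain ⟨i0, _, rfl⟩ := hc
      obtain ⟨j, hj⟩ := spectral_eigenvalues_mem hσH s Q hQidem hQorth hQsum hσdec i0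
      exact ⟨j, Finset.mem_univ j, hj.symm⟩
    · intro c hc
      simp only [Finset.mem_image] at hc ⊢
      obtain ⟨j, _, rfl⟩ := hc
      by_contra hno
      push_neg at hno
      have hz := eigProj_eq_zero hσH (s j) (fun i0 h => hno i0 (Finset.mem_univ i0) h)
      rw [spectral_eigProj_eq hσH s Q hs hQidem hQorth hQsum hσdec j] at hz
      exact (hQproj j).2.2 hz
  rw [himg, Finset.sum_image (fun x _ y _ h => hs h)]
  have hEP : ∀ j, eigProj hσH (s j) = Q j :=
    spectral_eigProj_eq hσH s Q hs hQidem hQorth hQsum hσdec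
  rw [Finset.sum_congr rfl (fun j _ => by rw [hEP j])]
  rw [← Finset.sum_neg_distrib]
  refine Finset.sum_congr rfl fun j _ => ?_
  -- per-j computation
  have hBdec : Q j * ρ * Q j = ∑ i, r i • (P i * Q j) := by
    rw [hρdec, Finset.mul_sum, Finset.sum_mul]
    refine Finset.sum_congr rfl fun i _ => ?_
    rw [Matrix.mul_smul, Matrix.smul_mul, ← hPQ]
    rw [mul_assoc, hQidem j]
  have hB : (Q j * ρ * Q j).IsHermitian := by
    show (Q j * ρ * Q j)ᴴ = Q j * ρ * Q j
    rw [conjTranspose_mul, conjTranspose_mul, (hQproj j).1, hρH.eq]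
    simp only [mul_assoc]
  have heta : eta (Q j * ρ * Q j)
      = -∑ i, (r i * Real.log (r i)) * (P i * Q j).trace.re := by
    have hunfold : eta (Q j * ρ * Q j)
        = -∑ i, hB.eigenvalues i * Real.log (hB.eigenvalues i) := dif_pos hB
    rw [hunfold]
    congr 1
    exact sum_f_eigen hB r (fun i => P i * Q j) hr (hRidem j) (hRorth j) hBdec
      (fun x => x * Real.log x) (by simp)
  have htrace : (Q j * ρ * Q j).trace = (ρ * Q j).trace := by
    rw [trace_mul_cycle, hQidem j, trace_mul_comm]
  have hT : (ρ * Q j).trace.re = ∑ i, r i * (P i * Q j).trace.re := by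
    have hmul : ρ * Q j = ∑ i, r i • (P i * Q j) := by
      rw [hρdec, Finset.sum_mul]
      exact Finset.sum_congr rfl fun i _ => Matrix.smul_mul _ _ _
    rw [hmul, trace_sum, Complex.re_sum]
    exact Finset.sum_congr rfl fun i _ => by rw [trace_smul, Complex.smul_re, smul_eq_mul]
  set T := (ρ * Q j).trace.re with hTdef
  -- scalar computation
  have key : ∑ i ∈ Finset.univ.filter (fun i => 0 < r i * (P i * Q j).trace.re),
      r i * ((P i * Q j).trace.re * Real.log (r i / T))
      = ∑ i, (r i * Real.log (r i)) * (P i * Q j).trace.re - T * Real.log T := by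
    have h1 : ∀ i ∈ Finset.univ.filter (fun i => 0 < r i * (P i * Q j).trace.re),
        r i * ((P i * Q j).trace.re * Real.log (r i / T))
        = (r i * Real.log (r i)) * (P i * Q j).trace.re
          - (r i * (P i * Q j).trace.re) * Real.log T := by
      intro i hi
      have hipos : 0 < r i * (P i * Q j).trace.re := (Finset.mem_filter.mp hi).2
      have hrpos : 0 < r i := by
        rcases (hr0 i).lt_or_eq with h | h
        · exact h
        · rw [← h, zero_mul] at hipos; exact absurd hipos (lt_irrefl 0)
      have hTpos : 0 < T := by
        rw [hT]
        calc (0 : ℝ) < r i * (P i * Q j).trace.re := hipos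
          _ ≤ ∑ i, r i * (P i * Q j).trace.re :=
            Finset.single_le_sum (fun i' _ => mul_nonneg (hr0 i') (hc0 i' j))
              (Finset.mem_univ i)
      rw [Real.log_div (ne_of_gt hrpos) (ne_of_gt hTpos)]
      ring
    rw [Finset.sum_congr rfl h1, Finset.sum_sub_distrib]
    have hvanish : ∀ i, ¬ (0 < r i * (P i * Q j).trace.re) → r i * (P i * Q j).trace.re = 0 :=
      fun i h => le_antisymm (not_lt.mp h) (mul_nonneg (hr0 i) (hc0 i j))
    rw [Finset.sum_filter_of_ne (fun i _ hne => by
      by_contra hnot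
      apply hne
      rw [show r i * Real.log (r i) * (P i * Q j).trace.re
          = (r i * (P i * Q j).trace.re) * Real.log (r i) from by ring, hvanish i hnot, zero_mul])]
    rw [Finset.sum_filter_of_ne (fun i _ hne => by
      by_contra hnot
      exact hne (by rw [hvanish i hnot, zero_mul]))]
    congr 1
    rw [← Finset.sum_mul, ← hT]
  have hcond : condF ρ (Q j)
      = -∑ i ∈ Finset.univ.filter (fun i => 0 < r i * (P i * Q j).trace.re),
        r i * ((P i * Q j).trace.re * Real.log (r i / T)) := by
    rw [condF, heta, htrace, ← hTdef, key]
    ring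
  rw [trace_mul_comm, hcond, mul_neg, Finset.mul_sum]
end

section
/- Let ρ be a density matrix with spectral decomposition ρ = Σ_i ρ_i P_i into distinct eigenvalues, and define ΔS(ρ) = S(ρ) − S(ρ|ρ). Then ΔS(ρ) ≥ −Σ_i (rank P_i)·ρ_i·ln((rank P_i)·ρ_i) ≥ 0, where terms with ρ_i = 0 are taken to be 0. -/
open Matrix
open scoped ComplexOrder

section Aux
open Polynomial
variable {n : ℕ}

lemma charpoly_conj_aux (U M : Matrix (Fin n) (Fin n) ℂ) (h1 : U * star U = 1) :
    (U * M * star U).charpoly = M.charpoly := by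
  have hcm : charmatrix (U * M * star U) =
      (C : ℂ →+* ℂ[X]).mapMatrix U * charmatrix M * (C : ℂ →+* ℂ[X]).mapMatrix (star U) := by
    unfold charmatrix
    rw [mul_sub, sub_mul]
    congr 1
    · rw [mul_assoc, (scalar_commute (X : ℂ[X]) (fun r' => Commute.all _ _)
        ((C : ℂ →+* ℂ[X]).mapMatrix (star U))).eq, ← mul_assoc, ← _root_.map_mul, h1,
        _root_.map_one, one_mul]
    · rw [← _root_.map_mul, ← _root_.map_mul]
  have hdet : ((C : ℂ →+* ℂ[X]).mapMatrix U).det * ((C : ℂ →+* ℂ[X]).mapMatrix (star U)).det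
      = 1 := by
    rw [← det_mul, ← _root_.map_mul, h1, _root_.map_one, det_one]
  calc (U * M * star U).charpoly
      = ((C : ℂ →+* ℂ[X]).mapMatrix U).det * (charmatrix M).det *
          ((C : ℂ →+* ℂ[X]).mapMatrix (star U)).det := by
        rw [Matrix.charpoly, hcm, det_mul, det_mul]
    _ = ((C : ℂ →+* ℂ[X]).mapMatrix U).det * ((C : ℂ →+* ℂ[X]).mapMatrix (star U)).det *
          (charmatrix M).det := by ring
    _ = M.charpoly := by rw [hdet, one_mul, Matrix.charpoly]

lemma charpoly_diag_aux (d : Fin n → ℂ) :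
    (diagonal d).charpoly = ∏ i, (X - C (d i)) := by
  rw [charpoly_of_upperTriangular _ (blockTriangular_diagonal d)]
  simp

lemma roots_prod_aux (f : Fin n → ℂ) :
    (∏ i, (X - C (f i))).roots = Multiset.map f Finset.univ.val := by
  rw [Finset.prod_eq_multiset_prod]
  have : (fun i => X - C (f i)) = (fun a => X - C a) ∘ f := rfl
  rw [this, ← Multiset.map_map, roots_multiset_prod_X_sub_C]

lemma eig_multiset {A : Matrix (Fin n) (Fin n) ℂ} (hA : A.IsHermitian)
    (U : Matrix (Fin n) (Fin n) ℂ) (h1 : U * star U = 1) (d : Fin n → ℝ)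
    (hAeq : A = U * diagonal (fun i => (d i : ℂ)) * star U) :
    Multiset.map hA.eigenvalues Finset.univ.val = Multiset.map d Finset.univ.val := by
  have hU' : (hA.eigenvectorUnitary : Matrix (Fin n) (Fin n) ℂ) *
      star (hA.eigenvectorUnitary : Matrix (Fin n) (Fin n) ℂ) = 1 :=
    (Matrix.mem_unitaryGroup_iff).mp (hA.eigenvectorUnitary).2
  have e1 : A.charpoly = ∏ i, (X - C ((d i : ℂ))) := by
    rw [hAeq, charpoly_conj_aux _ _ h1, charpoly_diag_aux]
  have e2 : A.charpoly = ∏ i, (X - C ((hA.eigenvalues i : ℂ))) := by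
    conv_lhs => rw [hA.spectral_theorem]
    rw [Unitary.conjStarAlgAut_apply, charpoly_conj_aux _ _ hU', charpoly_diag_aux]
    rfl
  have hroots := congrArg Polynomial.roots (e2.symm.trans e1)
  rw [roots_prod_aux, roots_prod_aux] at hroots
  apply Multiset.map_injective (f := (Complex.ofReal : ℝ → ℂ)) Complex.ofReal_injective
  rw [Multiset.map_map, Multiset.map_map]
  exact hroots

lemma sum_eig_eq {A : Matrix (Fin n) (Fin n) ℂ} (hA : A.IsHermitian)
    (U : Matrix (Fin n) (Fin n) ℂ) (h1 : U * star U = 1) (d : Fin n → ℝ)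
    (hAeq : A = U * diagonal (fun i => (d i : ℂ)) * star U) (f : ℝ → ℝ) :
    ∑ i, f (hA.eigenvalues i) = ∑ i, f (d i) := by
  have h := eig_multiset hA U h1 d hAeq
  rw [Finset.sum_eq_multiset_sum, Finset.sum_eq_multiset_sum]
  have h1' : (fun i => f (hA.eigenvalues i)) = f ∘ hA.eigenvalues := rfl
  have h2' : (fun i => f (d i)) = f ∘ d := rfl
  rw [h1', h2', ← Multiset.map_map, ← Multiset.map_map, h]

end Aux

/-- If `ρ = ∑ᵢ ρᵢ Pᵢ` is the spectral decomposition of `ρ` into distinct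
eigenvalues and `ΔS(ρ) = S(ρ) − S(ρ|ρ)`, then
`ΔS(ρ) ≥ −∑ᵢ (rank Pᵢ)·ρᵢ·ln((rank Pᵢ)·ρᵢ) ≥ 0`. -/
theorem deltaS_lower_bound {n k : ℕ} (hn : 1 ≤ n)
    (ρ : Matrix (Fin n) (Fin n) ℂ)
    (hρ : ρ.PosSemidef) (hρ1 : ρ.trace = 1)
    (r : Fin k → ℝ) (P : Fin k → Matrix (Fin n) (Fin n) ℂ)
    (hr : Function.Injective r)
    (hPproj : ∀ i, (P i)ᴴ = P i ∧ P i * P i = P i ∧ P i ≠ 0)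
    (hPorth : ∀ i i', i ≠ i' → P i * P i' = 0)
    (hPsum : ∑ i, P i = 1)
    (hρdec : ρ = ∑ i, r i • P i) :
    (-∑ i, ((P i).rank : ℝ) * r i * Real.log (((P i).rank : ℝ) * r i))
        ≤ eta ρ - condS ρ ρ ∧
    0 ≤ -∑ i, ((P i).rank : ℝ) * r i * Real.log (((P i).rank : ℝ) * r i) := by
  classical
  have hH : ρ.IsHermitian := hρ.1
  set U : Matrix (Fin n) (Fin n) ℂ := (hH.eigenvectorUnitary : Matrix (Fin n) (Fin n) ℂ)
    with hUdef
  have hU1 : U * star U = 1 := (Matrix.mem_unitaryGroup_iff).mp (hH.eigenvectorUnitary).2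
  have hU2 : star U * U = 1 := (Matrix.mem_unitaryGroup_iff').mp (hH.eigenvectorUnitary).2
  set lam : Fin n → ℝ := hH.eigenvalues with hlam
  have hPP : ∀ i, P i * P i = P i := fun i => (hPproj i).2.1
  have hPH : ∀ i, (P i)ᴴ = P i := fun i => (hPproj i).1
  have hρP : ∀ j, ρ * P j = r j • P j := by
    intro j
    rw [hρdec, Finset.sum_mul]
    rw [Fintype.sum_eq_single j (fun b hbj => by
      rw [smul_mul_assoc, hPorth b j hbj, smul_zero])]
    rw [smul_mul_assoc, hPP]
  have hPρ : ∀ j, P j * ρ = r j • P j := by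
    intro j
    rw [hρdec, Finset.mul_sum]
    rw [Fintype.sum_eq_single j (fun b hbj => by
      rw [mul_smul_comm, hPorth j b (fun h => hbj h.symm), smul_zero])]
    rw [mul_smul_comm, hPP]
  set N : Fin k → Matrix (Fin n) (Fin n) ℂ := fun j => star U * P j * U with hNdef
  have hkey : ∀ X : Matrix (Fin n) (Fin n) ℂ, U * (star U * X) = X := fun X => by
    rw [← mul_assoc, hU1, one_mul]
  have hkey2 : ∀ X : Matrix (Fin n) (Fin n) ℂ, star U * (U * X) = X := fun X => by
    rw [← mul_assoc, hU2, one_mul]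
  have hNsum : ∑ j, N j = 1 := by
    simp only [hNdef]
    rw [← Finset.sum_mul, ← Finset.mul_sum, hPsum, mul_one, hU2]
  have hDN : ∀ j, diagonal (RCLike.ofReal ∘ lam) * N j = r j • N j := by
    intro j
    rw [← hH.conjStarAlgAut_star_eigenvectorUnitary, Unitary.conjStarAlgAut_star_apply, ← hUdef]
    calc star U * ρ * U * N j = star U * (ρ * P j) * U := by
          simp only [hNdef, mul_assoc, hkey]
      _ = r j • N j := by
          rw [hρP j]
          simp only [hNdef, mul_smul_comm, smul_mul_assoc, mul_assoc]
  have hND : ∀ j, N j * diagonal (RCLike.ofReal ∘ lam) = r j • N j := by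
    intro j
    rw [← hH.conjStarAlgAut_star_eigenvectorUnitary, Unitary.conjStarAlgAut_star_apply, ← hUdef]
    calc N j * (star U * ρ * U) = star U * (P j * ρ) * U := by
          simp only [hNdef, mul_assoc, hkey]
      _ = r j • N j := by
          rw [hPρ j]
          simp only [hNdef, mul_smul_comm, smul_mul_assoc, mul_assoc]
  have hrow : ∀ j a b, lam a ≠ r j → N j a b = 0 := by
    intro j a b hne
    have h := congrFun (congrFun (hDN j) a) b
    rw [Matrix.diagonal_mul, Matrix.smul_apply] at h
    have h2 : ((lam a : ℂ) - (r j : ℂ)) * N j a b = 0 := by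
      rw [sub_mul, sub_eq_zero]
      rw [Complex.real_smul] at h
      exact h
    rcases mul_eq_zero.mp h2 with h3 | h3
    · exact absurd (by exact_mod_cast sub_eq_zero.mp h3) hne
    · exact h3
  have hcol : ∀ j a b, lam b ≠ r j → N j a b = 0 := by
    intro j a b hne
    have h := congrFun (congrFun (hND j) a) b
    rw [Matrix.mul_diagonal, Matrix.smul_apply] at h
    have h2 : N j a b * ((lam b : ℂ) - (r j : ℂ)) = 0 := by
      rw [mul_sub, sub_eq_zero]
      rw [Complex.real_smul, mul_comm ((r j : ℂ))] at h
      exact h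
    rcases mul_eq_zero.mp h2 with h3 | h3
    · exact h3
    · exact absurd (by exact_mod_cast sub_eq_zero.mp h3) hne
  have hNdiag : ∀ j, N j = diagonal (fun a => if lam a = r j then (1 : ℂ) else 0) := by
    intro j
    ext a b
    by_cases ha : lam a = r j
    · by_cases hb : lam b = r j
      · have hsum := congrFun (congrFun hNsum a) b
        rw [Matrix.sum_apply] at hsum
        rw [Fintype.sum_eq_single j (fun m hmj => hrow m a b (by
          rw [ha]; exact fun hh => hmj (hr hh.symm)))] at hsum
        rw [hsum, Matrix.one_apply, Matrix.diagonal_apply]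
        by_cases hab : a = b <;> simp [hab, ha, hb]
      · rw [hcol j a b hb, Matrix.diagonal_apply]
        have hab : a ≠ b := fun h => hb (h ▸ ha)
        simp [hab]
    · rw [hrow j a b ha, Matrix.diagonal_apply]
      by_cases hab : a = b
      · subst hab; simp [ha]
      · simp [hab]
  have hPQ : ∀ j, P j = U * diagonal (fun a => if lam a = r j then (1 : ℂ) else 0) * star U := by
    intro j
    rw [← hNdiag j, hNdef]
    simp only [mul_assoc, hkey]
    rw [← mul_assoc, mul_assoc, hU1, mul_one]
  have himg : Finset.image lam Finset.univ = Finset.image r Finset.univ := by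
    apply Finset.ext
    intro c
    simp only [Finset.mem_image, Finset.mem_univ, true_and]
    constructor
    · rintro ⟨a, rfl⟩
      by_contra hc
      push_neg at hc
      have h1 := congrFun (congrFun hNsum a) a
      rw [Matrix.sum_apply] at h1
      have hz : ∀ j, N j a a = 0 := fun j => by
        rw [hNdiag j, Matrix.diagonal_apply_eq]
        exact if_neg (fun h => hc j h.symm)
      rw [Matrix.one_apply_eq] at h1
      simp only [hz, Finset.sum_const_zero] at h1
      exact zero_ne_one h1
    · rintro ⟨i, rfl⟩
      by_contra hc
      push_neg at hc
      apply (hPproj i).2.2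
      rw [hPQ i]
      have hz : (fun a => if lam a = r i then (1 : ℂ) else 0) = fun _ => 0 :=
        funext fun a => if_neg (hc a)
      rw [hz, diagonal_zero, Matrix.mul_zero, Matrix.zero_mul]
  -- multiplicities
  set m : Fin k → ℕ := fun i => (Finset.univ.filter (fun a => lam a = r i)).card with hmdef
  have hUdet : IsUnit U.det := by
    apply IsUnit.of_mul_eq_one (star U).det
    rw [← det_mul, hU1, det_one]
  have hsUdet : IsUnit (star U).det := by
    apply IsUnit.of_mul_eq_one U.det
    rw [← det_mul, hU2, det_one]
  have hrank : ∀ i, (P i).rank = m i := by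
    intro i
    rw [hPQ i, rank_mul_eq_left_of_isUnit_det _ _ hsUdet,
      rank_mul_eq_right_of_isUnit_det _ _ hUdet, rank_diagonal, hmdef, Fintype.card_subtype]
    congr 1
    apply Finset.filter_congr
    intro a _
    by_cases h : lam a = r i <;> simp [h]
  have hfib : ∀ i, ∃ a, lam a = r i := by
    intro i
    have : r i ∈ Finset.image lam Finset.univ := by
      rw [himg]
      exact Finset.mem_image_of_mem r (Finset.mem_univ i)
    simpa using this
  have hm1 : ∀ i, (1 : ℝ) ≤ m i := by
    intro i
    have : 0 < m i := by
      obtain ⟨a, ha⟩ := hfib i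
      exact Finset.card_pos.mpr ⟨a, Finset.mem_filter.mpr ⟨Finset.mem_univ a, ha⟩⟩
    exact_mod_cast this
  have hsum_comp : ∀ f : ℝ → ℝ, ∑ a, f (lam a) = ∑ i, (m i : ℝ) * f (r i) := by
    intro f
    rw [Finset.sum_comp f lam, himg, Finset.sum_image (fun x _ y _ h => hr h)]
    simp [hmdef, nsmul_eq_mul]
  -- nonnegativity of eigenvalues
  have hlam0 : ∀ a, 0 ≤ lam a := fun a => hρ.eigenvalues_nonneg a
  have hr0 : ∀ i, 0 ≤ r i := by
    intro i
    obtain ⟨a, ha⟩ := hfib i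
    rw [← ha]; exact hlam0 a
  -- trace fact
  have hsum1 : ∑ i, (m i : ℝ) * r i = 1 := by
    have htr : ρ.trace = ∑ a, (lam a : ℂ) := by
      conv_lhs => rw [hH.spectral_theorem]
      rw [Unitary.conjStarAlgAut_apply, Matrix.trace_mul_cycle, ← hUdef, hU2, one_mul, trace_diagonal]
      rfl
    have : (∑ a, lam a) = 1 := by
      have := congrArg Complex.re (htr.symm.trans hρ1)
      simpa using this
    have h := hsum_comp (fun x => x)
    rw [← h, this]
  have hx0 : ∀ i, 0 ≤ (m i : ℝ) * r i := fun i =>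
    mul_nonneg (Nat.cast_nonneg _) (hr0 i)
  have hxle1 : ∀ i, (m i : ℝ) * r i ≤ 1 := by
    intro i
    rw [← hsum1]
    exact Finset.single_le_sum (fun j _ => hx0 j) (Finset.mem_univ i)
  -- eta ρ
  have heta : eta ρ = -∑ i, (m i : ℝ) * (r i * Real.log (r i)) := by
    rw [_root_.eta, dif_pos hH]
    have h1 := hsum_comp (fun x => x * Real.log x)
    rw [h1]
  -- Q ρ Q
  have hQ : ∀ i, P i * ρ * P i = r i • P i := by
    intro i
    rw [hPρ i, smul_mul_assoc, hPP i]
  have hQherm : ∀ i, (P i * ρ * P i).IsHermitian := by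
    intro i
    rw [hQ i]
    unfold Matrix.IsHermitian
    rw [conjTranspose_smul, hPH i]
    simp
  have hQeq : ∀ i, P i * ρ * P i =
      U * diagonal (fun a => (((if lam a = r i then r i else 0 : ℝ)) : ℂ)) * star U := by
    intro i
    rw [hQ i, hPQ i, ← smul_mul_assoc, ← mul_smul_comm, ← Matrix.diagonal_smul]
    have hfun : (r i • fun a => if lam a = r i then (1 : ℂ) else 0)
        = fun a => (((if lam a = r i then r i else 0 : ℝ)) : ℂ) := by
      funext a
      by_cases h : lam a = r i <;> simp [h, Complex.real_smul]
    rw [hfun]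
  have htrP : ∀ i, (P i).trace = (m i : ℂ) := by
    intro i
    rw [hPQ i, Matrix.trace_mul_cycle, hU2, one_mul, trace_diagonal]
    rw [Finset.sum_boole]
  have htr1 : ∀ i, (P i * ρ).trace.re = (m i : ℝ) * r i := by
    intro i
    rw [hPρ i, Matrix.trace_smul, htrP i]
    simp [Complex.real_smul, mul_comm]
  have htrQ : ∀ i, (P i * ρ * P i).trace.re = (m i : ℝ) * r i := by
    intro i
    rw [hQ i, Matrix.trace_smul, htrP i]
    simp [Complex.real_smul, mul_comm]
  have hetaQ : ∀ i, eta (P i * ρ * P i) = -((m i : ℝ) * (r i * Real.log (r i))) := by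
    intro i
    rw [_root_.eta, dif_pos (hQherm i)]
    have h1 := sum_eig_eq (hQherm i) U hU1 (fun a => if lam a = r i then r i else 0)
      (hQeq i) (fun x => x * Real.log x)
    rw [h1]
    have h2 : ∀ a, (if lam a = r i then r i else 0) * Real.log (if lam a = r i then r i else 0)
        = if lam a = r i then r i * Real.log (r i) else 0 := by
      intro a
      by_cases h : lam a = r i <;> simp [h]
    simp only [h2]
    rw [Finset.sum_ite, Finset.sum_const, Finset.sum_const_zero, add_zero, nsmul_eq_mul]
  have hcondF : ∀ i, condF ρ (P i) = -((m i : ℝ) * (r i * Real.log (r i)))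
      + ((m i : ℝ) * r i) * Real.log ((m i : ℝ) * r i) := by
    intro i
    rw [condF, hetaQ i, htrQ i]
  have hcondS : condS ρ ρ = ∑ i, ((m i : ℝ) * r i) *
      (-((m i : ℝ) * (r i * Real.log (r i))) + ((m i : ℝ) * r i) * Real.log ((m i : ℝ) * r i)) := by
    rw [condS, dif_pos hH]
    have himg' : Finset.image hH.eigenvalues Finset.univ = Finset.image r Finset.univ := himg
    rw [himg', Finset.sum_image (fun x _ y _ h => hr h)]
    apply Finset.sum_congr rfl
    intro i _
    have heig : eigProj hH (r i) = P i := by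
      rw [eigProj, ← hUdef, ← hPQ i]
    rw [heig, htr1 i, hcondF i]
  -- final inequalities
  have hrankR : ∀ i, ((P i).rank : ℝ) = (m i : ℝ) := fun i => by rw [hrank i]
  simp only [hrankR]
  constructor
  · rw [heta, hcondS]
    have key : ∀ i ∈ Finset.univ, (m i : ℝ) * (r i * Real.log (r i))
        + ((m i : ℝ) * r i) * (-((m i : ℝ) * (r i * Real.log (r i)))
          + ((m i : ℝ) * r i) * Real.log ((m i : ℝ) * r i))
        ≤ (m i : ℝ) * r i * Real.log ((m i : ℝ) * r i) := by
      intro i _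
      rcases eq_or_lt_of_le (hr0 i) with hri | hri
      · rw [← hri]
        simp
      · have hmpos : (0 : ℝ) < (m i : ℝ) := lt_of_lt_of_le one_pos (hm1 i)
        have hlogm : 0 ≤ Real.log (m i : ℝ) := Real.log_nonneg (hm1 i)
        have hxpos : 0 < (m i : ℝ) * r i := mul_pos hmpos hri
        have hlogx : Real.log ((m i : ℝ) * r i) = Real.log (m i : ℝ) + Real.log (r i) :=
          Real.log_mul (ne_of_gt hmpos) (ne_of_gt hri)
        have hx1 : (m i : ℝ) * r i ≤ 1 := hxle1 i
        rw [hlogx]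
        nlinarith [mul_nonneg (mul_nonneg (le_of_lt hxpos) (sub_nonneg.mpr hx1)) hlogm]
    have h2 := Finset.sum_le_sum key
    rw [Finset.sum_add_distrib] at h2
    linarith
  · rw [neg_nonneg]
    apply Finset.sum_nonpos
    intro i _
    rcases eq_or_lt_of_le (hr0 i) with hri | hri
    · rw [← hri]; simp
    · have hmpos : (0 : ℝ) < (m i : ℝ) := lt_of_lt_of_le one_pos (hm1 i)
      have hxpos : 0 < (m i : ℝ) * r i := mul_pos hmpos hri
      have hlog : Real.log ((m i : ℝ) * r i) ≤ 0 :=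
        Real.log_nonpos (le_of_lt hxpos) (hxle1 i)
      exact mul_nonpos_of_nonneg_of_nonpos (le_of_lt hxpos) hlog
end

section
/- Let ρ be a density matrix on an n-dimensional complex Hilbert space and let Q̲ = {Q_j} be a resolution of the identity, i.e., a finite family of non-zero pairwise orthogonal projections with Σ_j Q_j = I. Define S(ρ|Q̲) = Σ_j (rank Q_j / n)·F(ρ,Q_j). Then 0 ≤ S(ρ|Q̲) ≤ S(ρ); moreover S(ρ|Q̲) = 0 if every Q_j has rank one, and S(ρ|Q̲) = S(ρ) if Q̲ = {I}. -/
open Matrix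
open scoped ComplexOrder

section Aux
variable {n : ℕ}

/-- conjugation cancel -/
lemma unitary_conj_cancel {U : Matrix.unitaryGroup (Fin n) ℂ} (X : Matrix (Fin n) (Fin n) ℂ) :
    star (U : Matrix (Fin n) (Fin n) ℂ) * ((U : Matrix (Fin n) (Fin n) ℂ) * X *
      star (U : Matrix (Fin n) (Fin n) ℂ)) * (U : Matrix (Fin n) (Fin n) ℂ) = X := by
  have h1 : star (U : Matrix (Fin n) (Fin n) ℂ) * (U : Matrix (Fin n) (Fin n) ℂ) = 1 :=
    Matrix.UnitaryGroup.star_mul_self U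
  calc star (U : Matrix (Fin n) (Fin n) ℂ) * ((U : Matrix (Fin n) (Fin n) ℂ) * X *
      star (U : Matrix (Fin n) (Fin n) ℂ)) * (U : Matrix (Fin n) (Fin n) ℂ)
      = (star (U : Matrix (Fin n) (Fin n) ℂ) * (U : Matrix (Fin n) (Fin n) ℂ)) * X *
        (star (U : Matrix (Fin n) (Fin n) ℂ) * (U : Matrix (Fin n) (Fin n) ℂ)) := by
        noncomm_ring
    _ = X := by rw [h1]; simp

lemma trace_eq_sum_eig {A : Matrix (Fin n) (Fin n) ℂ} (hA : A.IsHermitian) :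
    A.trace = ∑ i, (hA.eigenvalues i : ℂ) := by
  conv_lhs => rw [hA.spectral_theorem, Unitary.conjStarAlgAut_apply]
  rw [Matrix.trace_mul_cycle]
  rw [Matrix.UnitaryGroup.star_mul_self, one_mul, Matrix.trace_diagonal]
  rfl

lemma eta_of_hermitian {A : Matrix (Fin n) (Fin n) ℂ} (hA : A.IsHermitian) :
    eta A = -∑ i, hA.eigenvalues i * Real.log (hA.eigenvalues i) := by
  rw [eta, dif_pos hA]
variable {n : ℕ}

lemma quad_conj (U : Matrix.unitaryGroup (Fin n) ℂ) (X : Matrix (Fin n) (Fin n) ℂ)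
    (c : Fin n → ℂ) :
    star ((U : Matrix (Fin n) (Fin n) ℂ) *ᵥ c) ⬝ᵥ
      (((U : Matrix (Fin n) (Fin n) ℂ) * X * star (U : Matrix (Fin n) (Fin n) ℂ)) *ᵥ
        ((U : Matrix (Fin n) (Fin n) ℂ) *ᵥ c)) = star c ⬝ᵥ (X *ᵥ c) := by
  set Um : Matrix (Fin n) (Fin n) ℂ := (U : Matrix (Fin n) (Fin n) ℂ)
  have h1 : star Um * Um = 1 := Matrix.UnitaryGroup.star_mul_self U
  have h2 : (Um * X * star Um) *ᵥ (Um *ᵥ c) = (Um * X) *ᵥ c := by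
    rw [mulVec_mulVec]
    congr 1
    rw [mul_assoc, mul_assoc, h1, mul_one]
  have h3 : Umᴴ * (Um * X) = X := by
    rw [← Matrix.star_eq_conjTranspose, ← mul_assoc, h1, one_mul]
  rw [h2, star_mulVec, dotProduct_mulVec, vecMul_vecMul, h3, ← dotProduct_mulVec]

lemma dot_self_re (v : Fin n → ℂ) :
    (star v ⬝ᵥ v).re = ∑ i, Complex.normSq (v i) := by
  rw [dotProduct, Complex.re_sum]
  congr 1; funext i
  simp [Complex.normSq_apply, Pi.star_apply, RCLike.star_def]

lemma quad_diag_re (f : Fin n → ℝ) (v : Fin n → ℂ) :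
    (star v ⬝ᵥ ((Matrix.diagonal (RCLike.ofReal ∘ f)) *ᵥ v)).re
      = ∑ i, f i * Complex.normSq (v i) := by
  have h : (Matrix.diagonal (RCLike.ofReal ∘ f)) *ᵥ v = fun i => (f i : ℂ) * v i := by
    funext i
    simp [Matrix.mulVec_diagonal, Function.comp]
  rw [h, dotProduct, Complex.re_sum]
  congr 1; funext i
  have : star v i * ((f i : ℂ) * v i) = (f i : ℂ) * ((starRingEnd ℂ) (v i) * v i) := by
    simp only [Pi.star_apply, RCLike.star_def]; ring
  rw [this, ← Complex.normSq_eq_conj_mul_self]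
  norm_cast

lemma count_le {ρ : Matrix (Fin n) (Fin n) ℂ} (hρ : ρ.PosSemidef)
    {Q : Matrix (Fin n) (Fin n) ℂ} (hQh : Qᴴ = Q) (hQi : Q * Q = Q)
    (hA : (Q * ρ * Q).IsHermitian) {s : ℝ} (hs : 0 < s) :
    (Finset.univ.filter fun i => s < hA.eigenvalues i).card ≤
      (Finset.univ.filter fun k => s < hρ.1.eigenvalues k).card := by
  classical
  by_contra hcon
  push_neg at hcon
  set A := Q * ρ * Q with hAdef
  set T : Finset (Fin n) := Finset.univ.filter fun i => s < hA.eigenvalues i with hT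
  set R : Finset (Fin n) := Finset.univ.filter fun k => s < hρ.1.eigenvalues k with hR
  set V : Matrix (Fin n) (Fin n) ℂ := (hA.eigenvectorUnitary : Matrix (Fin n) (Fin n) ℂ) with hV
  set U : Matrix (Fin n) (Fin n) ℂ := (hρ.1.eigenvectorUnitary : Matrix (Fin n) (Fin n) ℂ) with hU
  set M : Matrix ↥R ↥T ℂ := Matrix.of (fun k i => (star U * V) k.1 i.1) with hM
  have hnotinj : ¬ Function.Injective M.mulVecLin := by
    intro hinj
    have := LinearMap.finrank_le_finrank_of_injective hinj
    simp only [Module.finrank_pi, Fintype.card_coe] at this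
    omega
  have hker : ∃ c : ↥T → ℂ, c ≠ 0 ∧ M.mulVec c = 0 := by
    rw [← LinearMap.ker_eq_bot] at hnotinj
    rcases Submodule.exists_mem_ne_zero_of_ne_bot hnotinj with ⟨c, hc1, hc2⟩
    exact ⟨c, hc2, hc1⟩
  obtain ⟨c, hc0, hcker⟩ := hker
  set c' : Fin n → ℂ := fun i => if h : i ∈ T then c ⟨i, h⟩ else 0 with hc'
  set x : Fin n → ℂ := V *ᵥ c' with hx
  -- (1) quadratic form of A
  have hAx : star x ⬝ᵥ (A *ᵥ x) =
      star c' ⬝ᵥ ((Matrix.diagonal (RCLike.ofReal ∘ hA.eigenvalues)) *ᵥ c') := by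
    conv_lhs => rw [hA.spectral_theorem]
    exact quad_conj hA.eigenvectorUnitary _ c'
  -- (2) Q *ᵥ x = x
  have hQx : Q *ᵥ x = x := by
    set c'' : Fin n → ℂ := fun i => if h : i ∈ T then c ⟨i, h⟩ / (hA.eigenvalues i : ℂ) else 0
      with hc''
    have hdc : (Matrix.diagonal (RCLike.ofReal ∘ hA.eigenvalues)) *ᵥ c'' = c' := by
      funext i
      rw [Matrix.mulVec_diagonal]
      by_cases h : i ∈ T
      · have hne : (hA.eigenvalues i : ℂ) ≠ 0 := by
          have h2 : s < hA.eigenvalues i := by simpa [hT] using h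
          exact_mod_cast ne_of_gt (lt_trans hs h2)
        simp only [hc'', hc', h, dif_pos, Function.comp_apply]
        field_simp
        exact mul_comm _ _
      · simp [hc'', hc', h]
    have hAz : A *ᵥ (V *ᵥ c'') = x := by
      conv_lhs => rw [hA.spectral_theorem, Unitary.conjStarAlgAut_apply, mulVec_mulVec, mul_assoc, mul_assoc]
      rw [← hV, Matrix.UnitaryGroup.star_mul_self, mul_one, ← mulVec_mulVec, hdc]
    have hQA : Q * A = A := by
      rw [hAdef, ← mul_assoc, ← mul_assoc, hQi]
    rw [← hAz, mulVec_mulVec, hQA]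
  -- (3) transfer to ρ
  have hrx : star x ⬝ᵥ (ρ *ᵥ x) = star x ⬝ᵥ (A *ᵥ x) := by
    have h1 : A *ᵥ x = Q *ᵥ (ρ *ᵥ x) := by
      conv_rhs => rw [← hQx, mulVec_mulVec, mulVec_mulVec]
    have h2 : star x ᵥ* Q = star x := by
      calc star x ᵥ* Q = star x ᵥ* Qᴴ := by rw [hQh]
      _ = star (Q *ᵥ x) := (star_mulVec _ _).symm
      _ = star x := by rw [hQx]
    conv_rhs => rw [h1, dotProduct_mulVec, h2]
  -- (4) pass to eigenbasis of ρ
  set y : Fin n → ℂ := star U *ᵥ x with hy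
  have hUU : U * star U = 1 := Matrix.mem_unitaryGroup_iff.mp hρ.1.eigenvectorUnitary.2
  have hVV : V * star V = 1 := Matrix.mem_unitaryGroup_iff.mp hA.eigenvectorUnitary.2
  have hUy : U *ᵥ y = x := by
    rw [hy, mulVec_mulVec, hUU, one_mulVec]
  have hry : star x ⬝ᵥ (ρ *ᵥ x) =
      star y ⬝ᵥ ((Matrix.diagonal (RCLike.ofReal ∘ hρ.1.eigenvalues)) *ᵥ y) := by
    conv_lhs => rw [← hUy, hρ.1.spectral_theorem]
    exact quad_conj hρ.1.eigenvectorUnitary _ y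
  -- norms agree
  have hxx : star x ⬝ᵥ x = star c' ⬝ᵥ c' := by
    have h := quad_conj hA.eigenvectorUnitary 1 c'
    rw [mul_one] at h
    rw [show ((hA.eigenvectorUnitary : Matrix (Fin n) (Fin n) ℂ) * star (hA.eigenvectorUnitary : Matrix (Fin n) (Fin n) ℂ)) = 1 from hVV, one_mulVec, one_mulVec] at h
    exact h
  have hyy : star y ⬝ᵥ y = star x ⬝ᵥ x := by
    have h := quad_conj hρ.1.eigenvectorUnitary 1 y
    rw [mul_one] at h
    rw [show ((hρ.1.eigenvectorUnitary : Matrix (Fin n) (Fin n) ℂ) * star (hρ.1.eigenvectorUnitary : Matrix (Fin n) (Fin n) ℂ)) = 1 from hUU, one_mulVec, one_mulVec, hUy] at h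
    exact h.symm
  -- (5) y vanishes on R
  have hyR : ∀ k ∈ R, y k = 0 := by
    intro k hk
    have h0 : y = (star U * V) *ᵥ c' := by rw [hy, hx, mulVec_mulVec]
    have h1 : y k = ∑ i : Fin n, (star U * V) k i * c' i := by rw [h0]; rfl
    have h2 : ∑ i : Fin n, (star U * V) k i * c' i = ∑ i ∈ T, (star U * V) k i * c' i := by
      symm
      apply Finset.sum_subset (Finset.subset_univ T)
      intro i _ hiT
      simp [hc', hiT]
    have h3 : ∑ i ∈ T, (star U * V) k i * c' i = ∑ i : ↥T, (star U * V) k i.1 * c' i.1 :=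
      (Finset.sum_coe_sort T _).symm
    have h4 : ∀ i : ↥T, (star U * V) k i.1 * c' i.1 = (star U * V) k i.1 * c i := by
      intro i
      congr 1
      simp [hc', i.2]
    have h5 : ∑ i : ↥T, (star U * V) k i.1 * c i = M.mulVec c ⟨k, hk⟩ := rfl
    rw [h1, h2, h3, Finset.sum_congr rfl (fun i _ => h4 i), h5, hcker]
    rfl
  -- (6) the contradiction
  obtain ⟨i₀, hi₀⟩ : ∃ i₀ : ↥T, c i₀ ≠ 0 := Function.ne_iff.mp hc0
  have hc'i₀ : c' i₀.1 = c i₀ := by simp [hc', i₀.2]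
  set nsum : ℝ := ∑ i, Complex.normSq (c' i) with hnsum
  have hyx : (star y ⬝ᵥ y).re = nsum := by
    rw [hyy, hxx, dot_self_re]
  have upper : (star y ⬝ᵥ ((Matrix.diagonal (RCLike.ofReal ∘ hρ.1.eigenvalues)) *ᵥ y)).re
      ≤ s * nsum := by
    rw [quad_diag_re]
    have : s * nsum = ∑ k, s * Complex.normSq (y k) := by
      rw [← Finset.mul_sum, ← hyx, dot_self_re]
    rw [this]
    apply Finset.sum_le_sum
    intro k _
    by_cases hk : k ∈ R
    · rw [hyR k hk]
      simp
    · have hμ : hρ.1.eigenvalues k ≤ s := by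
        by_contra hgt
        exact hk (by simp [hR]; exact lt_of_not_ge hgt)
      exact mul_le_mul_of_nonneg_right hμ (Complex.normSq_nonneg _)
  have lower : s * nsum <
      (star c' ⬝ᵥ ((Matrix.diagonal (RCLike.ofReal ∘ hA.eigenvalues)) *ᵥ c')).re := by
    rw [quad_diag_re, hnsum, Finset.mul_sum]
    apply Finset.sum_lt_sum
    · intro i _
      by_cases hiT : i ∈ T
      · have : s < hA.eigenvalues i := by simpa [hT] using hiT
        exact mul_le_mul_of_nonneg_right this.le (Complex.normSq_nonneg _)
      · simp [hc', hiT]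
    · refine ⟨i₀.1, Finset.mem_univ _, ?_⟩
      have h1 : s < hA.eigenvalues i₀.1 := (Finset.mem_filter.mp i₀.2).2
      have h2 : 0 < Complex.normSq (c' i₀.1) := by
        rw [hc'i₀]
        exact Complex.normSq_pos.mpr hi₀
      exact mul_lt_mul_of_pos_right h1 h2
  have final : (star c' ⬝ᵥ ((Matrix.diagonal (RCLike.ofReal ∘ hA.eigenvalues)) *ᵥ c')).re
      ≤ s * nsum := by
    rw [← hAx, ← hrx, hry]
    exact upper
  exact absurd (lt_of_lt_of_le lower final) (lt_irrefl _)
variable {n : ℕ}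

lemma card_filter_comp (σ : Equiv.Perm (Fin n)) (f : Fin n → ℝ) (s : ℝ) :
    (Finset.univ.filter fun i => s < f (σ i)).card =
      (Finset.univ.filter fun i => s < f i).card := by
  apply Finset.card_bij (fun a _ => σ a)
  · intro a ha
    simp only [Finset.mem_filter, Finset.mem_univ, true_and] at ha ⊢
    exact ha
  · intro a ha b hb hab
    exact σ.injective hab
  · intro b hb
    refine ⟨σ.symm b, ?_, by simp⟩
    simp only [Finset.mem_filter, Finset.mem_univ, true_and] at hb ⊢
    simpa using hb

lemma sorted_dominate (f g : Fin n → ℝ) (hg0 : ∀ i, 0 ≤ g i)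
    (hcount : ∀ s : ℝ, 0 < s → (Finset.univ.filter fun i => s < f i).card ≤
      (Finset.univ.filter fun i => s < g i).card) (k : Fin n) :
    f (Tuple.sort f k) ≤ g (Tuple.sort g k) := by
  by_contra hlt
  push_neg at hlt
  have hmf : ∀ {a b : Fin n}, a ≤ b → f (Tuple.sort f a) ≤ f (Tuple.sort f b) :=
    fun h => Tuple.monotone_sort f h
  have hmg : ∀ {a b : Fin n}, a ≤ b → g (Tuple.sort g a) ≤ g (Tuple.sort g b) :=
    fun h => Tuple.monotone_sort g h
  set s : ℝ := (g (Tuple.sort g k) + f (Tuple.sort f k)) / 2 with hs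
  have hg'0 : 0 ≤ g (Tuple.sort g k) := hg0 _
  have hspos : 0 < s := by rw [hs]; nlinarith [hlt, hg'0]
  have hs1 : g (Tuple.sort g k) < s := by rw [hs]; linarith
  have hs2 : s < f (Tuple.sort f k) := by rw [hs]; linarith
  have hcard1 : (n : ℕ) - k ≤ (Finset.univ.filter fun i => s < f (Tuple.sort f i)).card := by
    have hsub : Finset.Ici k ⊆ Finset.univ.filter fun i => s < f (Tuple.sort f i) := by
      intro j hj
      rw [Finset.mem_Ici] at hj
      simp only [Finset.mem_filter, Finset.mem_univ, true_and]
      exact lt_of_lt_of_le hs2 (hmf hj)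
    calc (n : ℕ) - k = (Finset.Ici k).card := (Fin.card_Ici k).symm
    _ ≤ _ := Finset.card_le_card hsub
  have hcard2 : (Finset.univ.filter fun i => s < g (Tuple.sort g i)).card ≤ n - 1 - k := by
    have hsub : (Finset.univ.filter fun i => s < g (Tuple.sort g i)) ⊆ Finset.Ioi k := by
      intro j hj
      simp only [Finset.mem_filter, Finset.mem_univ, true_and] at hj
      rw [Finset.mem_Ioi]
      by_contra hle
      push_neg at hle
      exact absurd (lt_of_le_of_lt (hmg hle) hs1) (not_lt.mpr hj.le)
    calc _ ≤ (Finset.Ioi k).card := Finset.card_le_card hsub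
    _ = n - 1 - k := Fin.card_Ioi k
  have h1 := hcount s hspos
  rw [← card_filter_comp (Tuple.sort f) f s, ← card_filter_comp (Tuple.sort g) g s] at h1
  have hk := k.2
  omega

/-- the main scalar inequality -/
lemma key_real (l m : Fin n → ℝ) (hl0 : ∀ i, 0 ≤ l i) (hm0 : ∀ i, 0 ≤ m i)
    (hsum : ∑ i, m i = 1) (hdom : ∀ i, l i ≤ m i) :
    -∑ i, l i * Real.log (l i) + (∑ i, l i) * Real.log (∑ i, l i)
      ≤ -∑ i, m i * Real.log (m i) := by
  set t : ℝ := ∑ i, l i with ht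
  have hm1 : ∀ i, m i ≤ 1 := by
    intro i
    rw [← hsum]
    exact Finset.single_le_sum (fun j _ => hm0 j) (Finset.mem_univ i)
  have hstep2 : ∀ i, l i * -Real.log (m i) ≤ m i * -Real.log (m i) := by
    intro i
    apply mul_le_mul_of_nonneg_right (hdom i)
    rcases eq_or_lt_of_le (hm0 i) with h | h
    · rw [← h, Real.log_zero]; simp
    · simp only [neg_nonneg]
      exact Real.log_nonpos (le_of_lt h) (hm1 i)
  rcases eq_or_lt_of_le (Finset.sum_nonneg fun (i : Fin n) (_ : i ∈ Finset.univ) => hl0 i)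
    with hzero | hpos
  · have hall : ∀ i ∈ Finset.univ, l i = 0 :=
      (Finset.sum_eq_zero_iff_of_nonneg (fun i _ => hl0 i)).mp (by rw [← ht]; exact hzero.symm)
    have h1 : ∑ i, l i * Real.log (l i) = 0 :=
      Finset.sum_eq_zero fun i hi => by rw [hall i hi]; ring
    have h2 : 0 ≤ ∑ i, m i * -Real.log (m i) := by
      apply Finset.sum_nonneg
      intro i _
      calc (0:ℝ) = l i * -Real.log (m i) := by rw [hall i (Finset.mem_univ i)]; ring
      _ ≤ _ := hstep2 i
    have h3 : ∑ i, m i * -Real.log (m i) = -∑ i, m i * Real.log (m i) := by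
      simp [mul_neg]
    rw [h3] at h2
    rw [h1, ht, ← hzero, Real.log_zero]
    simpa using h2
  · -- t > 0
    have hstep1 : ∀ i, l i * Real.log t + l i * Real.log (m i) + (l i - t * m i)
        ≤ l i * Real.log (l i) := by
      intro i
      rcases eq_or_lt_of_le (hl0 i) with h | h
      · rw [← h]
        have : 0 ≤ t * m i := mul_nonneg hpos.le (hm0 i)
        simp only [zero_mul, zero_sub, zero_add]
        linarith
      · have hmi : 0 < m i := lt_of_lt_of_le h (hdom i)
        have harg : 0 < t * m i / l i := by positivity
        have hlog := Real.log_le_sub_one_of_pos harg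
        have hexp : Real.log (t * m i / l i)
            = Real.log t + Real.log (m i) - Real.log (l i) := by
          rw [Real.log_div (by positivity) (ne_of_gt h), Real.log_mul (ne_of_gt hpos)
            (ne_of_gt hmi)]
        rw [hexp] at hlog
        have := mul_le_mul_of_nonneg_left hlog h.le
        have heq : l i * (t * m i / l i - 1) = t * m i - l i := by
          field_simp
        rw [heq] at this
        nlinarith
    have hsum1 : ∑ i, (l i * Real.log t + l i * Real.log (m i) + (l i - t * m i))
        ≤ ∑ i, l i * Real.log (l i) := Finset.sum_le_sum fun i _ => hstep1 i
    have hexpand : ∑ i, (l i * Real.log t + l i * Real.log (m i) + (l i - t * m i))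
        = t * Real.log t + ∑ i, l i * Real.log (m i) := by
      rw [Finset.sum_add_distrib, Finset.sum_add_distrib, Finset.sum_sub_distrib,
        ← Finset.sum_mul, ← ht, ← Finset.mul_sum, hsum]
      ring
    rw [hexpand] at hsum1
    have h2 : ∑ i, l i * -Real.log (m i) ≤ ∑ i, m i * -Real.log (m i) :=
      Finset.sum_le_sum fun i _ => hstep2 i
    simp only [mul_neg, Finset.sum_neg_distrib] at h2
    linarith

/-- nonnegativity scalar lemma -/
lemma nonneg_real (l : Fin n → ℝ) (hl0 : ∀ i, 0 ≤ l i) :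
    0 ≤ -∑ i, l i * Real.log (l i) + (∑ i, l i) * Real.log (∑ i, l i) := by
  set t : ℝ := ∑ i, l i with ht
  have h : ∀ i, l i * Real.log (l i) ≤ l i * Real.log t := by
    intro i
    rcases eq_or_lt_of_le (hl0 i) with h | h
    · rw [← h]; simp
    · apply mul_le_mul_of_nonneg_left _ (hl0 i)
      apply Real.log_le_log h
      rw [ht]
      exact Finset.single_le_sum (fun j _ => hl0 j) (Finset.mem_univ i)
  have h4 : ∑ i, l i * Real.log (l i) ≤ ∑ i, l i * Real.log t :=
    Finset.sum_le_sum fun i _ => h i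
  rw [← Finset.sum_mul] at h4
  linarith

/-- single nonzero scalar lemma -/
lemma single_real (l : Fin n → ℝ)
    (h1 : ∀ i j, l i ≠ 0 → l j ≠ 0 → i = j) :
    ∑ i, l i * Real.log (l i) = (∑ i, l i) * Real.log (∑ i, l i) := by
  by_cases hz : ∀ i, l i = 0
  · simp [hz]
  · push_neg at hz
    obtain ⟨i₀, hi₀⟩ := hz
    have hothers : ∀ i ∈ Finset.univ, i ≠ i₀ → l i = 0 := by
      intro i _ hne
      by_contra hne2
      exact hne (h1 i i₀ hne2 hi₀)
    have hsum : ∑ i, l i = l i₀ := by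
      rw [Finset.sum_eq_single i₀ hothers (by simp)]
    have hsum2 : ∑ i, l i * Real.log (l i) = l i₀ * Real.log (l i₀) := by
      apply Finset.sum_eq_single i₀
      · intro i hi hne
        rw [hothers i hi hne]; ring
      · simp
    rw [hsum, hsum2]
variable {n : ℕ}

lemma eta_expand {A : Matrix (Fin n) (Fin n) ℂ} (hA : A.IsHermitian) :
    eta A = -∑ i, hA.eigenvalues i * Real.log (hA.eigenvalues i) := by
  rw [eta, dif_pos hA]

lemma trace_re_eq {A : Matrix (Fin n) (Fin n) ℂ} (hA : A.IsHermitian) :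
    A.trace.re = ∑ i, hA.eigenvalues i := by
  rw [trace_eq_sum_eig hA, Complex.re_sum]
  simp

lemma condF_le_eta {ρ Q : Matrix (Fin n) (Fin n) ℂ} (hρ : ρ.PosSemidef) (hρ1 : ρ.trace = 1)
    (hQh : Qᴴ = Q) (hQi : Q * Q = Q) : condF ρ Q ≤ eta ρ := by
  have hA' : (Q * ρ * Q).PosSemidef := by
    have := hρ.mul_mul_conjTranspose_same Q
    rwa [hQh] at this
  have hA : (Q * ρ * Q).IsHermitian := hA'.1
  set l : Fin n → ℝ := hA.eigenvalues with hl
  set mu : Fin n → ℝ := hρ.1.eigenvalues with hmu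
  have hl0 : ∀ i, 0 ≤ l i := hA'.eigenvalues_nonneg
  have hm0 : ∀ i, 0 ≤ mu i := hρ.eigenvalues_nonneg
  have hmsum : ∑ k, mu k = 1 := by
    have h := trace_re_eq hρ.1
    rw [hρ1] at h
    simpa using h.symm
  have hdom : ∀ k, l (Tuple.sort l k) ≤ mu (Tuple.sort mu k) :=
    sorted_dominate l mu hm0 (fun s hs => count_le hρ hQh hQi hA hs)
  have hkey := key_real (fun k => l (Tuple.sort l k)) (fun k => mu (Tuple.sort mu k))
    (fun k => hl0 _) (fun k => hm0 _)
    (by rw [show ∑ k, mu (Tuple.sort mu k) = ∑ k, mu k from Equiv.sum_comp _ mu]; exact hmsum)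
    hdom
  have e1 : ∑ k, l (Tuple.sort l k) * Real.log (l (Tuple.sort l k))
      = ∑ i, l i * Real.log (l i) := Equiv.sum_comp _ (fun j => l j * Real.log (l j))
  have e2 : ∑ k, l (Tuple.sort l k) = ∑ i, l i := Equiv.sum_comp _ l
  have e3 : ∑ k, mu (Tuple.sort mu k) * Real.log (mu (Tuple.sort mu k))
      = ∑ i, mu i * Real.log (mu i) := Equiv.sum_comp _ (fun j => mu j * Real.log (mu j))
  rw [e1, e2, e3] at hkey
  have hcondF : condF ρ Q = -∑ i, l i * Real.log (l i)
      + (∑ i, l i) * Real.log (∑ i, l i) := by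
    rw [condF, eta_expand hA, trace_re_eq hA]
  have hetaρ : eta ρ = -∑ i, mu i * Real.log (mu i) := eta_expand hρ.1
  rw [hcondF, hetaρ]
  exact hkey

lemma condF_nonneg {ρ Q : Matrix (Fin n) (Fin n) ℂ} (hρ : ρ.PosSemidef)
    (hQh : Qᴴ = Q) : 0 ≤ condF ρ Q := by
  have hA' : (Q * ρ * Q).PosSemidef := by
    have := hρ.mul_mul_conjTranspose_same Q
    rwa [hQh] at this
  have hA : (Q * ρ * Q).IsHermitian := hA'.1
  have h := nonneg_real hA.eigenvalues hA'.eigenvalues_nonneg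
  rwa [condF, eta_expand hA, trace_re_eq hA]

lemma condF_rank_one {ρ Q : Matrix (Fin n) (Fin n) ℂ} (hρ : ρ.PosSemidef)
    (hQh : Qᴴ = Q) (hrank : Q.rank = 1) : condF ρ Q = 0 := by
  have hA' : (Q * ρ * Q).PosSemidef := by
    have := hρ.mul_mul_conjTranspose_same Q
    rwa [hQh] at this
  have hA : (Q * ρ * Q).IsHermitian := hA'.1
  have hrk : (Q * ρ * Q).rank ≤ 1 := by
    calc (Q * ρ * Q).rank ≤ Q.rank := rank_mul_le_right (Q * ρ) Q
    _ = 1 := hrank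
  have hcard : Fintype.card {i // hA.eigenvalues i ≠ 0} ≤ 1 := by
    rw [← hA.rank_eq_card_non_zero_eigs]
    exact hrk
  have hpair : ∀ i j, hA.eigenvalues i ≠ 0 → hA.eigenvalues j ≠ 0 → i = j := by
    intro i j hi hj
    have := Fintype.card_le_one_iff.mp hcard ⟨i, hi⟩ ⟨j, hj⟩
    exact congrArg Subtype.val this
  have h := single_real hA.eigenvalues hpair
  rw [condF, eta_expand hA, trace_re_eq hA, h]
  ring

lemma proj_eig_idem {Q : Matrix (Fin n) (Fin n) ℂ} (hQ : Q.IsHermitian) (hQi : Q * Q = Q) :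
    ∀ i, hQ.eigenvalues i * hQ.eigenvalues i = hQ.eigenvalues i := by
  intro i
  set v : (Fin n) → ℂ := ⇑(hQ.eigenvectorBasis i) with hv
  have hev : Q *ᵥ v = hQ.eigenvalues i • v := hQ.mulVec_eigenvectorBasis i
  have h2 : Q *ᵥ (Q *ᵥ v) = Q *ᵥ v := by rw [mulVec_mulVec, hQi]
  rw [hev, mulVec_smul, hev, smul_smul] at h2
  have hvne : v ≠ 0 := by
    intro h0
    have hn1 := hQ.eigenvectorBasis.orthonormal.1 i
    have : (hQ.eigenvectorBasis i : EuclideanSpace ℂ (Fin n)) = 0 := by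
      ext j
      exact congrFun h0 j
    rw [this] at hn1
    simp at hn1
  obtain ⟨j, hj⟩ : ∃ j, v j ≠ 0 := by
    by_contra hall
    push_neg at hall
    exact hvne (funext hall)
  have h3 := congrFun h2 j
  simp only [Pi.smul_apply, Complex.real_smul, Complex.ofReal_mul] at h3
  have h4 : ((hQ.eigenvalues i : ℂ) * (hQ.eigenvalues i : ℂ)) = (hQ.eigenvalues i : ℂ) :=
    mul_right_cancel₀ hj (by linear_combination h3)
  exact_mod_cast h4

lemma proj_trace_rank {Q : Matrix (Fin n) (Fin n) ℂ} (hQ : Q.IsHermitian) (hQi : Q * Q = Q) :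
    ((Q.rank : ℝ)) = Q.trace.re := by
  classical
  have hsq := proj_eig_idem hQ hQi
  have h01 : ∀ i, hQ.eigenvalues i = 0 ∨ hQ.eigenvalues i = 1 := by
    intro i
    have h := hsq i
    rcases mul_eq_zero.mp (show hQ.eigenvalues i * (hQ.eigenvalues i - 1) = 0 by ring_nf; linarith [h]) with h' | h'
    · exact Or.inl h'
    · exact Or.inr (by linarith)
  rw [trace_re_eq hQ]
  have h1 : ∑ i, hQ.eigenvalues i = ∑ i, (if hQ.eigenvalues i ≠ 0 then (1:ℝ) else 0) := by
    apply Finset.sum_congr rfl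
    intro i _
    rcases h01 i with h | h
    · simp [h]
    · rw [h]; simp
  rw [h1, Finset.sum_boole]
  rw [hQ.rank_eq_card_non_zero_eigs, Fintype.card_subtype]

end Aux

/-- For a resolution of the identity `Q̲ = {Qⱼ}` define
`S(ρ|Q̲) = ∑ⱼ (rank Qⱼ / n)·F(ρ,Qⱼ)`. Then `0 ≤ S(ρ|Q̲) ≤ S(ρ)`; moreover `S(ρ|Q̲) = 0`
if all `Qⱼ` have rank one, and `S(ρ|Q̲) = S(ρ)` if `Q̲ = {I}`. -/
theorem condS_resolution {n m : ℕ} (hn : 1 ≤ n)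
    (ρ : Matrix (Fin n) (Fin n) ℂ)
    (hρ : ρ.PosSemidef) (hρ1 : ρ.trace = 1)
    (Q : Fin m → Matrix (Fin n) (Fin n) ℂ)
    (hQproj : ∀ j, (Q j)ᴴ = Q j ∧ Q j * Q j = Q j ∧ Q j ≠ 0)
    (hQorth : ∀ j j', j ≠ j' → Q j * Q j' = 0)
    (hQsum : ∑ j, Q j = 1) :
    (0 ≤ ∑ j, (((Q j).rank : ℝ) / n) * condF ρ (Q j) ∧
      ∑ j, (((Q j).rank : ℝ) / n) * condF ρ (Q j) ≤ eta ρ) ∧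
    ((∀ j, (Q j).rank = 1) → ∑ j, (((Q j).rank : ℝ) / n) * condF ρ (Q j) = 0) ∧
    ((∀ j, Q j = 1) → ∑ j, (((Q j).rank : ℝ) / n) * condF ρ (Q j) = eta ρ) := by
  have hQh : ∀ j, (Q j)ᴴ = Q j := fun j => (hQproj j).1
  have hQi : ∀ j, Q j * Q j = Q j := fun j => (hQproj j).2.1
  have hnR : (0:ℝ) < n := by exact_mod_cast hn
  have hw0 : ∀ j, 0 ≤ ((Q j).rank : ℝ) / n := fun j => by positivity
  have hsumrank : ∑ j, ((Q j).rank : ℝ) = n := by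
    have htr : ∑ j, (Q j).trace = (n : ℂ) := by
      rw [← Matrix.trace_sum, hQsum, Matrix.trace_one]
      simp
    have h2 : ∑ j, (Q j).trace.re = (n : ℝ) := by
      rw [← Complex.re_sum, htr]
      simp
    calc ∑ j, ((Q j).rank : ℝ) = ∑ j, (Q j).trace.re :=
      Finset.sum_congr rfl (fun j _ => proj_trace_rank (hQh j) (hQi j))
    _ = n := h2
  have hwsum : ∑ j, ((Q j).rank : ℝ) / n = 1 := by
    rw [← Finset.sum_div, hsumrank, div_self (ne_of_gt hnR)]
  refine ⟨⟨?_, ?_⟩, ?_, ?_⟩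
  · exact Finset.sum_nonneg fun j _ => mul_nonneg (hw0 j) (condF_nonneg hρ (hQh j))
  · calc ∑ j, (((Q j).rank : ℝ) / n) * condF ρ (Q j)
        ≤ ∑ j, (((Q j).rank : ℝ) / n) * eta ρ :=
          Finset.sum_le_sum fun j _ => mul_le_mul_of_nonneg_left
            (condF_le_eta hρ hρ1 (hQh j) (hQi j)) (hw0 j)
    _ = eta ρ := by rw [← Finset.sum_mul, hwsum, one_mul]
  · intro hr1
    apply Finset.sum_eq_zero
    intro j _
    rw [condF_rank_one hρ (hQh j) (hr1 j), mul_zero]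
  · intro hone
    have hm : m = 1 := by
      have h := congrFun (congrFun hQsum ⟨0, hn⟩) ⟨0, hn⟩
      rw [Matrix.sum_apply] at h
      simp only [hone, Matrix.one_apply_eq] at h
      have : ((m : ℂ)) = 1 := by
        simpa [Finset.sum_const, Finset.card_univ] using h
      exact_mod_cast this
    subst hm
    rw [Fin.sum_univ_one, hone 0, Matrix.rank_one]
    have h1 : condF ρ 1 = eta ρ := by
      rw [condF, one_mul, mul_one, hρ1]
      simp
    rw [h1]
    simp [Fintype.card_fin]
    rw [div_self (ne_of_gt hnR), one_mul]
end

section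
/- Let P̲ = {P_i} and Q̲ = {Q_j} be resolutions of the identity on an n-dimensional complex Hilbert space (finite families of non-zero pairwise orthogonal projections summing to I). With τ = (1/n)·tr, set q_j = τ(Q_j), p_{i|j} = τ(P_i Q_j)/τ(Q_j), and define H(P̲|Q̲) = Σ_j q_j · S_cl((p_{i|j})_i), where S_cl(p) = −Σ_k p_k ln p_k with the convention 0·ln 0 = 0. Then H(P̲|Q̲) = 0 if and only if Q̲ ≤ P̲, i.e., for each j there exists i with Q_j ≤ P_i (equivalently, P_i Q_j = Q_j). -/
open Matrix
open scoped ComplexOrder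

private lemma trace_re_eq' {n : ℕ} (A : Matrix (Fin n) (Fin n) ℂ) :
    (Aᴴ * A).trace.re = ∑ j, ∑ i, Complex.normSq (A i j) := by
  simp only [Matrix.trace, Matrix.diag, Matrix.mul_apply, Matrix.conjTranspose_apply]
  rw [Complex.re_sum]
  refine Finset.sum_congr rfl fun j _ => ?_
  rw [Complex.re_sum]
  refine Finset.sum_congr rfl fun i _ => ?_
  rw [Complex.star_def, ← Complex.normSq_eq_conj_mul_self]
  simp

private lemma trace_re_nonneg' {n : ℕ} (A : Matrix (Fin n) (Fin n) ℂ) :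
    0 ≤ (Aᴴ * A).trace.re := by
  rw [trace_re_eq']
  exact Finset.sum_nonneg fun j _ => Finset.sum_nonneg fun i _ => Complex.normSq_nonneg _

private lemma trace_re_eq_zero_iff' {n : ℕ} (A : Matrix (Fin n) (Fin n) ℂ) :
    (Aᴴ * A).trace.re = 0 ↔ A = 0 := by
  rw [trace_re_eq']
  constructor
  · intro h
    ext i j
    have h1 : ∀ j ∈ Finset.univ, (0:ℝ) ≤ ∑ i, Complex.normSq (A i j) := by
      intro j _; exact Finset.sum_nonneg fun i _ => Complex.normSq_nonneg _
    have := (Finset.sum_eq_zero_iff_of_nonneg h1).1 h j (Finset.mem_univ j)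
    have h2 := (Finset.sum_eq_zero_iff_of_nonneg
      (fun i _ => Complex.normSq_nonneg (A i j))).1 this i (Finset.mem_univ i)
    simpa using Complex.normSq_eq_zero.1 h2
  · intro h; simp [h]

private lemma key_facts {n : ℕ} (P Q : Matrix (Fin n) (Fin n) ℂ)
    (hP : Pᴴ = P) (hP2 : P * P = P) (hQ : Qᴴ = Q) (hQ2 : Q * Q = Q) :
    0 ≤ (P * Q).trace.re ∧ (P * Q).trace.re ≤ Q.trace.re ∧
      ((P * Q).trace.re = Q.trace.re ↔ P * Q = Q) := by
  have h1 : (P * Q)ᴴ * (P * Q) = Q * P * Q := by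
    rw [conjTranspose_mul, hP, hQ, mul_assoc Q P (P * Q), ← mul_assoc P P Q, hP2, ← mul_assoc]
  have htr : (Q * P * Q).trace = (P * Q).trace := by
    rw [Matrix.trace_mul_cycle, hQ2, Matrix.trace_mul_comm]
  have h2 : (Q - P * Q)ᴴ * (Q - P * Q) = Q - Q * P * Q := by
    have e : (Q - P * Q)ᴴ = Q - Q * P := by
      rw [conjTranspose_sub, conjTranspose_mul, hP, hQ]
    have e2 : Q * P * (P * Q) = Q * P * Q := by
      rw [mul_assoc Q P (P * Q), ← mul_assoc P P Q, hP2, ← mul_assoc]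
    rw [e, sub_mul, mul_sub, mul_sub, hQ2, e2, ← mul_assoc]
    abel
  have hnn : 0 ≤ (P * Q).trace.re := by
    have := trace_re_nonneg' (P * Q)
    rwa [h1, htr] at this
  have hdiff : ((Q - P * Q)ᴴ * (Q - P * Q)).trace.re = Q.trace.re - (P * Q).trace.re := by
    rw [h2, Matrix.trace_sub, htr, Complex.sub_re]
  refine ⟨hnn, ?_, ?_⟩
  · have := trace_re_nonneg' (Q - P * Q)
    rw [hdiff] at this; linarith
  · rw [← sub_eq_zero (a := (P * Q).trace.re), ← neg_eq_zero, neg_sub, ← hdiff,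
      trace_re_eq_zero_iff', sub_eq_zero]
    exact ⟨fun h => h.symm, fun h => h.symm⟩


/-- For resolutions of the identity `P̲ = {Pᵢ}` and `Q̲ = {Qⱼ}`, with
`τ = (1/n)·tr`, `qⱼ = τ(Qⱼ)`, `p_{i|j} = τ(PᵢQⱼ)/τ(Qⱼ)` and
`H(P̲|Q̲) = ∑ⱼ qⱼ · S_cl((p_{i|j})ᵢ)`, one has `H(P̲|Q̲) = 0` iff `Q̲ ≤ P̲`, i.e. for each
`j` there is `i` with `Qⱼ ≤ Pᵢ` (equivalently `PᵢQⱼ = Qⱼ`). -/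
theorem classical_condEntropy_eq_zero_iff {n k m : ℕ} (hn : 1 ≤ n)
    (P : Fin k → Matrix (Fin n) (Fin n) ℂ)
    (Q : Fin m → Matrix (Fin n) (Fin n) ℂ)
    (hPproj : ∀ i, (P i)ᴴ = P i ∧ P i * P i = P i ∧ P i ≠ 0)
    (hPorth : ∀ i i', i ≠ i' → P i * P i' = 0)
    (hPsum : ∑ i, P i = 1)
    (hQproj : ∀ j, (Q j)ᴴ = Q j ∧ Q j * Q j = Q j ∧ Q j ≠ 0)
    (hQorth : ∀ j j', j ≠ j' → Q j * Q j' = 0)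
    (hQsum : ∑ j, Q j = 1) :
    (∑ j, ((Q j).trace.re / n) *
        (-∑ i, (((P i * Q j).trace.re / n) / ((Q j).trace.re / n)) *
          Real.log (((P i * Q j).trace.re / n) / ((Q j).trace.re / n))) = 0)
      ↔ ∀ j, ∃ i, P i * Q j = Q j := by
  have hN : (0:ℝ) < n := by exact_mod_cast Nat.lt_of_lt_of_le Nat.zero_lt_one hn
  set T : Fin k → Fin m → ℝ := fun i j => (P i * Q j).trace.re with hT
  set tQ : Fin m → ℝ := fun j => (Q j).trace.re with htQdef
  have hkey : ∀ i j, 0 ≤ T i j ∧ T i j ≤ tQ j ∧ (T i j = tQ j ↔ P i * Q j = Q j) :=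
    fun i j => key_facts (P i) (Q j) (hPproj i).1 (hPproj i).2.1 (hQproj j).1 (hQproj j).2.1
  have htQpos : ∀ j, 0 < tQ j := by
    intro j
    have h1 : (Q j)ᴴ * Q j = Q j := by rw [(hQproj j).1, (hQproj j).2.1]
    have h2 : 0 ≤ tQ j := by
      have := trace_re_nonneg' (Q j); rwa [h1] at this
    rcases h2.lt_or_eq with h | h
    · exact h
    · exfalso
      have : (Q j) = 0 := by
        rw [← trace_re_eq_zero_iff' (Q j), h1]; exact h.symm
      exact (hQproj j).2.2 this
  have hsumT : ∀ j, ∑ i, T i j = tQ j := by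
    intro j
    have : ∑ i, P i * Q j = Q j := by
      rw [← Finset.sum_mul, hPsum, one_mul]
    simp only [hT, htQdef]
    rw [← Complex.re_sum, ← Matrix.trace_sum, this]
  -- p i j probabilities
  set p : Fin k → Fin m → ℝ := fun i j => T i j / tQ j with hp
  have hratio : ∀ i j, (T i j / n) / (tQ j / n) = p i j := by
    intro i j
    exact div_div_div_cancel_right₀ (ne_of_gt hN) _ _
  have hpnn : ∀ i j, 0 ≤ p i j := fun i j => div_nonneg (hkey i j).1 (htQpos j).le
  have hple : ∀ i j, p i j ≤ 1 := fun i j =>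
    (div_le_one (htQpos j)).2 (hkey i j).2.1
  have hpsum : ∀ j, ∑ i, p i j = 1 := by
    intro j
    rw [hp]
    simp only
    rw [← Finset.sum_div, hsumT, div_self (htQpos j).ne']
  have hterm_nonpos : ∀ i j, p i j * Real.log (p i j) ≤ 0 :=
    fun i j => mul_nonpos_of_nonneg_of_nonpos (hpnn i j)
      (Real.log_nonpos (hpnn i j) (hple i j))
  -- rewrite goal
  have hgoal : (∑ j, ((Q j).trace.re / n) *
        (-∑ i, (((P i * Q j).trace.re / n) / ((Q j).trace.re / n)) *
          Real.log (((P i * Q j).trace.re / n) / ((Q j).trace.re / n))) )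
      = ∑ j, (tQ j / n) * (-∑ i, p i j * Real.log (p i j)) := by
    refine Finset.sum_congr rfl fun j _ => ?_
    congr 1
    congr 1
    refine Finset.sum_congr rfl fun i _ => ?_
    rw [show ((P i * Q j).trace.re) = T i j from rfl,
      show ((Q j).trace.re) = tQ j from rfl, hratio i j]
  rw [hgoal]
  have houter_nonneg : ∀ j ∈ Finset.univ, (0:ℝ) ≤ (tQ j / n) * (-∑ i, p i j * Real.log (p i j)) := by
    intro j _
    apply mul_nonneg (div_nonneg (htQpos j).le hN.le)
    rw [neg_nonneg]
    exact Finset.sum_nonpos fun i _ => hterm_nonpos i j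
  constructor
  · intro h0 j
    have hj := (Finset.sum_eq_zero_iff_of_nonneg houter_nonneg).1 h0 j (Finset.mem_univ j)
    have hE : ∑ i, p i j * Real.log (p i j) = 0 := by
      rcases mul_eq_zero.1 hj with h | h
      · exact absurd h (div_ne_zero (htQpos j).ne' hN.ne')
      · linarith [neg_eq_zero.1 h]
    have hterm0 : ∀ i ∈ Finset.univ, p i j * Real.log (p i j) = 0 := by
      have := (Finset.sum_eq_zero_iff_of_nonneg
        (fun i (_ : i ∈ Finset.univ) => neg_nonneg.2 (hterm_nonpos i j))).1
        (by rw [Finset.sum_neg_distrib, hE, neg_zero])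
      intro i hi
      have := this i hi
      linarith [this]
    -- exists i with p i j ≠ 0
    have : ∃ i, p i j ≠ 0 := by
      by_contra hc
      push_neg at hc
      have := hpsum j
      rw [Finset.sum_eq_zero (fun i _ => hc i)] at this
      norm_num at this
    obtain ⟨i, hi⟩ := this
    refine ⟨i, ?_⟩
    have := hterm0 i (Finset.mem_univ i)
    rcases mul_eq_zero.1 this with h | h
    · exact absurd h hi
    · rcases Real.log_eq_zero.1 h with h | h | h
      · exact absurd h hi
      · have : T i j = tQ j := by
          rw [show p i j = T i j / tQ j from rfl, div_eq_one_iff_eq (htQpos j).ne'] at h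
          linarith [h]
        exact (hkey i j).2.2.1 this
      · exfalso; have := hpnn i j; linarith
  · intro h
    apply Finset.sum_eq_zero
    intro j _
    obtain ⟨i₀, hi₀⟩ := h j
    have hT0 : T i₀ j = tQ j := (hkey i₀ j).2.2.2 hi₀
    have hothers : ∀ i, i ≠ i₀ → T i j = 0 := by
      intro i hi
      have hs : ∑ i' ∈ Finset.univ \ {i₀}, T i' j = 0 := by
        have := hsumT j
        rw [← Finset.sum_compl_add_sum {i₀}] at this
        simp only [Finset.sum_singleton] at this
        have : ∑ i' ∈ Finset.univ \ {i₀}, T i' j = tQ j - T i₀ j := by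
          rw [Finset.compl_eq_univ_sdiff] at this
          linarith
        rw [this, hT0]; ring
      have := (Finset.sum_eq_zero_iff_of_nonneg
        (fun i' (_ : i' ∈ Finset.univ \ {i₀}) => (hkey i' j).1)).1 hs i
        (by simp [hi])
      exact this
    have : ∀ i ∈ Finset.univ, p i j * Real.log (p i j) = 0 := by
      intro i _
      by_cases hii : i = i₀
      · subst hii
        have : p i j = 1 := by rw [hp]; simp only; rw [hT0, div_self (htQpos j).ne']
        rw [this]; simp
      · have : p i j = 0 := by rw [hp]; simp only; rw [hothers i hii, zero_div]
        rw [this]; simp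
    rw [Finset.sum_eq_zero this]
    simp
end
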